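/- arXiv:2405.03785 — 7 statements merged into one kernel-verified Lean document; each statement's English description precedes it below -/
import Mathlib

section
/- Let T be an existential second-order (ESO) theory over a signature τ. Suppose T has no models of cardinality strictly less than |τ| + ℵ₀, and that for every cardinality in which T has a model, any two models of T of that cardinality are isomorphic. Then T is complete: any two models of T satisfy exactly the same ESO sentences. -/
open FirstOrder Language Set

universe u v w x

namespace TeamSem

/-- A purely relational language consisting of `k` fresh relation symbols with
prescribed arities. -/
def relLang (k : ℕ) (ar : Fin k → ℕ) : FirstOrder.Language where
  Functions := fun _ => Empty
  Relations := fun n => {i : Fin k // ar i = n}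

/-- Interpret the `k` fresh relation symbols by the given relations on `M`. -/
def relStructure {k : ℕ} {ar : Fin k → ℕ} {M : Type w}
    (S : ∀ i : Fin k, Set (Fin (ar i) → M)) : (relLang k ar).Structure M where
  funMap := fun f _ => f.elim
  RelMap := fun R v => (fun j => v (Fin.cast R.2 j)) ∈ S R.1

/-- Satisfaction of a first-order sentence over `L` together with `k` fresh relation
symbols, in the expansion of `M` interpreting the fresh symbols by `S`. -/
def RealizeWith {L : FirstOrder.Language.{u, v}} (M : Type w) [L.Structure M] {k : ℕ} {ar : Fin k → ℕ}
    (φ : (L.sum (relLang k ar)).Sentence) (S : ∀ i : Fin k, Set (Fin (ar i) → M)) : Prop :=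
  letI := relStructure S
  M ⊨ φ

/-- An existential second-order sentence over `L`: finitely many fresh relation symbols
together with a first-order sentence over the enlarged language. -/
structure ESOSentence (L : FirstOrder.Language.{u, v}) where
  k : ℕ
  ar : Fin k → ℕ
  toSentence : (L.sum (relLang k ar)).Sentence

/-- Satisfaction of an existential second-order sentence. -/
def ESOSentence.Realize {L : FirstOrder.Language.{u, v}} (ψ : ESOSentence L) (M : Type w)
    [L.Structure M] : Prop :=
  ∃ S : ∀ i : Fin ψ.k, Set (Fin (ψ.ar i) → M), RealizeWith M ψ.toSentence S

/-- The Cartesian product of an `n`-ary and an `m`-ary relation. -/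
def teamProd {A : Type w} {n m : ℕ} (X : Set (Fin n → A)) (Y : Set (Fin m → A)) :
    Set (Fin (n + m) → A) :=
  {s | (fun i => s (Fin.castAdd m i)) ∈ X ∧ (fun j => s (Fin.natAdd n j)) ∈ Y}

/-- The generalized projection `Pr_ι` of an `n`-ary relation. -/
def teamProj {A : Type w} {n m : ℕ} (ι : Fin m → Fin n) (X : Set (Fin n → A)) :
    Set (Fin m → A) :=
  (fun b => b ∘ ι) '' X

/-- The diagonal (identity) relation on `A`. -/
def diag (A : Type w) : Set (Fin 2 → A) := {s | s 0 = s 1}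

/-- The interpretation of a relation symbol, as a set of tuples. -/
def relSet (L : FirstOrder.Language.{u, v}) (A : Type w) [L.Structure A] {n : ℕ} (R : L.Relations n) :
    Set (Fin n → A) :=
  {s | Structure.RelMap R s}

/-- The graph of the interpretation of a function symbol, as a set of tuples. -/
def funGraph (L : FirstOrder.Language.{u, v}) (A : Type w) [L.Structure A] {n : ℕ} (F : L.Functions n) :
    Set (Fin (n + 1) → A) :=
  {s | Structure.funMap F (fun i => s i.castSucc) = s (Fin.last n)}

/-- A family of relations on `A` that is closed under the operations generating the
closure `cl`; a family `𝒴` satisfies `𝒴 = cl(𝒴)` precisely when it is closed. -/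
structure IsClosedFamily (L : FirstOrder.Language.{u, v}) (A : Type w) [L.Structure A]
    (𝒴 : ∀ n : ℕ, Set (Set (Fin n → A))) : Prop where
  empty_mem : ∀ n, (∅ : Set (Fin n → A)) ∈ 𝒴 n
  univ_mem : ∀ n, (Set.univ : Set (Fin n → A)) ∈ 𝒴 n
  inter_mem : ∀ (n : ℕ) (X Y : Set (Fin n → A)), X ∈ 𝒴 n → Y ∈ 𝒴 n → X ∩ Y ∈ 𝒴 n
  prod_mem : ∀ (n m : ℕ) (X : Set (Fin n → A)) (Y : Set (Fin m → A)),
    X ∈ 𝒴 n → Y ∈ 𝒴 m → teamProd X Y ∈ 𝒴 (n + m)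
  proj_mem : ∀ (n m : ℕ) (ι : Fin m → Fin n) (X : Set (Fin n → A)),
    X ∈ 𝒴 n → teamProj ι X ∈ 𝒴 m
  diag_mem : diag A ∈ 𝒴 2
  rel_mem : ∀ (n : ℕ) (R : L.Relations n), relSet L A R ∈ 𝒴 n
  graph_mem : ∀ (n : ℕ) (F : L.Functions n), funGraph L A F ∈ 𝒴 (n + 1)

/-- A partial team map from `A` to `B`.  Arities are preserved by typing; the domain
and the range are closed families (equivalently, `dom f = cl(dom f)` and
`ran f = cl(ran f)`); the empty relation of each arity is mapped to the empty relation
(in the untyped setting this is automatic for arity-preserving maps). -/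
structure PartialTeamMap (L : FirstOrder.Language.{u, v}) (A : Type w) (B : Type x)
    [L.Structure A] [L.Structure B] where
  dom : ∀ n : ℕ, Set (Set (Fin n → A))
  toFun : ∀ n : ℕ, Set (Fin n → A) → Set (Fin n → B)
  dom_closed : IsClosedFamily L A dom
  ran_closed : IsClosedFamily L B fun n => toFun n '' dom n
  map_empty : ∀ n, toFun n (∅ : Set (Fin n → A)) = ∅

namespace PartialTeamMap

variable {L : FirstOrder.Language.{u, v}} {A : Type w} {B : Type x} [L.Structure A] [L.Structure B]

/-- The range family of a partial team map. -/
def ran (f : PartialTeamMap L A B) : ∀ n : ℕ, Set (Set (Fin n → B)) :=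
  fun n => f.toFun n '' f.dom n

/-- Conditions (PI1)–(PI6): `f` is a partial team isomorphism. -/
structure IsIso (f : PartialTeamMap L A B) : Prop where
  empty_iff : ∀ (n : ℕ) (X : Set (Fin n → A)), X ∈ f.dom n → (X = ∅ ↔ f.toFun n X = ∅)
  univ_iff : ∀ (n : ℕ) (X : Set (Fin n → A)), X ∈ f.dom n →
    (X = Set.univ ↔ f.toFun n X = Set.univ)
  singleton_iff : ∀ (n : ℕ) (X : Set (Fin n → A)), X ∈ f.dom n →
    ((∃ s, X = {s}) ↔ ∃ t, f.toFun n X = {t})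
  map_prod : ∀ (n m : ℕ) (X : Set (Fin n → A)) (Y : Set (Fin m → A)),
    X ∈ f.dom n → Y ∈ f.dom m →
    f.toFun (n + m) (teamProd X Y) = teamProd (f.toFun n X) (f.toFun m Y)
  map_proj : ∀ (n m : ℕ) (ι : Fin m → Fin n) (X : Set (Fin n → A)), X ∈ f.dom n →
    f.toFun m (teamProj ι X) = teamProj ι (f.toFun n X)
  subset_iff : ∀ (n : ℕ) (X Y : Set (Fin n → A)), X ∈ f.dom n → Y ∈ f.dom n →
    (X ⊆ Y ↔ f.toFun n X ⊆ f.toFun n Y)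
  map_diag : f.toFun 2 (diag A) = diag B
  map_rel : ∀ (n : ℕ) (R : L.Relations n), f.toFun n (relSet L A R) = relSet L B R
  map_graph : ∀ (n : ℕ) (F : L.Functions n), f.toFun (n + 1) (funGraph L A F) = funGraph L B F

/-- `f` is a partial elementary team map: it preserves (in both directions) all
first-order sentences over `L` augmented by fresh relation symbols interpreted by
nonempty relations from the domain of `f`. -/
def IsElementary (f : PartialTeamMap L A B) : Prop :=
  ∀ (k : ℕ) (ar : Fin k → ℕ) (φ : (L.sum (relLang k ar)).Sentence)
    (X : ∀ i : Fin k, Set (Fin (ar i) → A)),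
    (∀ i, X i ∈ f.dom (ar i)) → (∀ i, (X i).Nonempty) →
    (RealizeWith A φ X ↔ RealizeWith B φ fun i => f.toFun (ar i) (X i))

/-- `f` is total: its domain consists of all relations on `A`. -/
def Total (f : PartialTeamMap L A B) : Prop := ∀ n, f.dom n = Set.univ

/-- Every singleton `{a}`, `a : A`, of arity 1 is in the domain of `f`. -/
def ElementTotal (f : PartialTeamMap L A B) : Prop :=
  ∀ a : A, ({fun _ => a} : Set (Fin 1 → A)) ∈ f.dom 1

/-- Every singleton `{b}`, `b : B`, of arity 1 is in the range of `f`. -/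
def ElementSurjective (f : PartialTeamMap L A B) : Prop :=
  ∀ b : B, ({fun _ => b} : Set (Fin 1 → B)) ∈ f.ran 1

end PartialTeamMap

end TeamSem

namespace TeamSem

section LosVaughtAux

open Cardinal

variable {L : FirstOrder.Language.{u, u}}

/-- ESO realization transfers along isomorphisms. -/
theorem eso_realize_of_equiv {M N : Type u} [L.Structure M] [L.Structure N]
    (g : M ≃[L] N) (ψ : ESOSentence L) (h : ψ.Realize M) : ψ.Realize N := by
  obtain ⟨S, hS⟩ := h
  refine ⟨fun i => (fun s => (g : M → N) ∘ s) '' S i, ?_⟩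
  letI iM := relStructure S
  letI iN := relStructure (fun i => (fun s => (g : M → N) ∘ s) '' S i)
  let G : M ≃[L.sum (relLang ψ.k ψ.ar)] N :=
    { toEquiv := g.toEquiv
      map_fun' := by
        rintro n (f | f) x
        · exact g.map_fun' f x
        · exact f.elim
      map_rel' := by
        rintro n (r | r) x
        · exact g.map_rel' r x
        · show ((fun j => (g.toEquiv ∘ x) (Fin.cast r.2 j)) ∈
              (fun s => (g : M → N) ∘ s) '' S r.1) ↔
            ((fun j => x (Fin.cast r.2 j)) ∈ S r.1)
          constructor
          · rintro ⟨s, hs, he⟩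
            have hinj : Function.Injective (g : M → N) := g.injective
            have hse : s = fun j => x (Fin.cast r.2 j) := by
              funext j
              exact hinj (congrFun he j)
            rwa [hse] at hs
          · intro hx
            exact ⟨fun j => x (Fin.cast r.2 j), hx, rfl⟩ }
  exact (StrongHomClass.realize_sentence G ψ.toSentence).1 hS

/-- A relational language with one symbol for each fresh relation symbol of each of the
ESO sentences in the family `E`. -/
def extLang {ι : Type u} (E : ι → ESOSentence L) : FirstOrder.Language.{u, u} where
  Functions _ := PEmpty.{u + 1}
  Relations n := Σ i : ι, {j : Fin (E i).k // (E i).ar j = n}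

/-- The inclusion of the language of the `i`-th sentence into the combined language. -/
def extHom {ι : Type u} (E : ι → ESOSentence L) (i : ι) :
    (L.sum (relLang (E i).k (E i).ar)) →ᴸ (L.sum (extLang E)) :=
  LHom.sumMap (LHom.id L) ⟨fun _ f => f.elim, fun _ r => ⟨i, r⟩⟩

/-- Interpret the combined language by a family of witnessing relations. -/
def extStructure {ι : Type u} (E : ι → ESOSentence L) {M : Type w}
    (W : ∀ i, ∀ j : Fin (E i).k, Set (Fin ((E i).ar j) → M)) :
    (extLang E).Structure M where
  funMap := fun f _ => f.elim
  RelMap := fun R v => (fun j => v (Fin.cast R.2.2 j)) ∈ W R.1 R.2.1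

theorem extHom_isExpansionOn {ι : Type u} (E : ι → ESOSentence L) {M : Type w} [L.Structure M]
    (W : ∀ i, ∀ j : Fin (E i).k, Set (Fin ((E i).ar j) → M)) (i : ι) :
    letI := relStructure (W i)
    letI := extStructure E W
    (extHom E i).IsExpansionOn M := by
  letI := relStructure (W i)
  letI := extStructure E W
  constructor
  · rintro n (f | f) x
    · rfl
    · exact f.elim
  · rintro n (R | R) x
    · rfl
    · rfl

/-- Extraction of witnesses from a structure over the combined language. -/
def extract {ι : Type u} (E : ι → ESOSentence L) (K : Type w)
    [(L.sum (extLang E)).Structure K] (i : ι) (j : Fin (E i).k) :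
    Set (Fin ((E i).ar j) → K) :=
  {s | @Structure.RelMap (L.sum (extLang E)) K _ ((E i).ar j) (Sum.inr ⟨i, j, rfl⟩) s}

theorem extHom_isExpansionOn' {ι : Type u} (E : ι → ESOSentence L) (K : Type w)
    [(L.sum (extLang E)).Structure K] (i : ι) :
    letI : L.Structure K := (LHom.sumInl : L →ᴸ (L.sum (extLang E))).reduct K
    letI := relStructure (extract E K i)
    (extHom E i).IsExpansionOn K := by
  letI : L.Structure K := (LHom.sumInl : L →ᴸ (L.sum (extLang E))).reduct K
  letI := relStructure (extract E K i)
  constructor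
  · rintro n (f | f) x
    · rfl
    · exact f.elim
  · rintro n (R | ⟨j, h⟩) x
    · rfl
    · subst h
      rfl

theorem card_sentence_le (L' : FirstOrder.Language.{u, u}) :
    #(L'.Sentence) ≤ L'.card + ℵ₀ := by
  have h1 : #(L'.Sentence) ≤ #(Σ n, L'.BoundedFormula Empty n) :=
    Cardinal.mk_le_of_injective (f := fun φ => ⟨0, φ⟩) (fun a b h => by simpa using h)
  refine h1.trans (BoundedFormula.card_le.trans ?_)
  simp only [Cardinal.mk_eq_zero, Cardinal.lift_zero, zero_add, Cardinal.lift_uzero,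
    Cardinal.lift_id]
  exact max_le (self_le_add_left _ _) (self_le_add_right _ _)

theorem card_relLang_le (k : ℕ) (ar : Fin k → ℕ) : (relLang k ar).card ≤ ℵ₀ := by
  haveI h1 : ∀ l, Countable ((relLang k ar).Functions l) :=
    fun _ => (inferInstance : Countable Empty)
  haveI h2 : ∀ l, Countable ((relLang k ar).Relations l) :=
    fun l => (inferInstance : Countable {i : Fin k // ar i = l})
  haveI : Countable ((relLang k ar).Symbols) := by
    unfold Language.Symbols
    exact inferInstance
  exact Cardinal.mk_le_aleph0

theorem card_esoSentence_le : #(ESOSentence L) ≤ L.card + ℵ₀ := by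
  have e : ESOSentence L ≃
      Σ p : ULift.{u} (Σ k : ℕ, Fin k → ℕ), (L.sum (relLang p.down.1 p.down.2)).Sentence :=
    { toFun := fun ψ => ⟨⟨⟨ψ.k, ψ.ar⟩⟩, ψ.toSentence⟩
      invFun := fun p => ⟨p.1.down.1, p.1.down.2, p.2⟩
      left_inv := fun ψ => rfl
      right_inv := fun p => rfl }
  rw [Cardinal.mk_congr e, Cardinal.mk_sigma]
  have hb : ∀ p : ULift.{u} (Σ k : ℕ, Fin k → ℕ),
      #((L.sum (relLang p.down.1 p.down.2)).Sentence) ≤ L.card + ℵ₀ := by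
    intro p
    refine (card_sentence_le _).trans ?_
    rw [card_sum, Cardinal.lift_uzero]
    have h2 : Cardinal.lift.{u} (relLang p.down.1 p.down.2).card ≤ ℵ₀ := by
      rw [← Cardinal.lift_aleph0.{u, 0}]
      exact Cardinal.lift_le.2 (card_relLang_le p.down.1 p.down.2)
    calc L.card + Cardinal.lift.{u} (relLang p.down.1 p.down.2).card + ℵ₀
        ≤ L.card + ℵ₀ + ℵ₀ := add_le_add (add_le_add le_rfl h2) le_rfl
      _ = L.card + ℵ₀ := by rw [add_assoc, Cardinal.aleph0_add_aleph0]
  refine (Cardinal.sum_le_sum _ (fun _ => L.card + ℵ₀) hb).trans ?_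
  rw [Cardinal.sum_const']
  have hι : #(ULift.{u} (Σ k : ℕ, Fin k → ℕ)) ≤ ℵ₀ := Cardinal.mk_le_aleph0
  calc #(ULift.{u} (Σ k : ℕ, Fin k → ℕ)) * (L.card + ℵ₀) ≤ ℵ₀ * (L.card + ℵ₀) :=
        mul_le_mul' hι le_rfl
    _ ≤ (L.card + ℵ₀) * (L.card + ℵ₀) := mul_le_mul' (self_le_add_left _ _) le_rfl
    _ = L.card + ℵ₀ := Cardinal.mul_eq_self (self_le_add_left _ _)

theorem card_extLang_le {ι : Type u} (E : ι → ESOSentence L) :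
    (extLang E).card ≤ #ι * ℵ₀ := by
  have hF : IsEmpty (Σ l, (extLang E).Functions l) := by
    constructor; rintro ⟨l, f⟩; exact f.elim
  have h1 : (extLang E).card = #(Σ l, (extLang E).Relations l) := by
    rw [Language.card, Cardinal.mk_sum, Cardinal.mk_eq_zero (Σ l, (extLang E).Functions l),
      Cardinal.lift_zero, zero_add, Cardinal.lift_id]
  rw [h1]
  have hinj : Function.Injective
      (fun R : Σ l, (extLang E).Relations l => ((R.2.1, (R.2.2 : {j // _}).1.1) : ι × ℕ)) := by
    rintro ⟨_, i, j, rfl⟩ ⟨_, i', j', rfl⟩ e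
    simp only [Prod.mk.injEq] at e
    obtain ⟨rfl, hv⟩ := e
    have : j = j' := Fin.ext hv
    subst this
    rfl
  refine (Cardinal.mk_le_of_injective hinj).trans ?_
  rw [Cardinal.mk_prod]
  simp [Cardinal.mk_nat, Cardinal.lift_id]

/-- Core transfer lemma: under the hypotheses of the Łoś–Vaught test, any ESO sentence
realized in one model of `T` is realized in any other. -/
theorem eso_transfer (T : Set (ESOSentence L))
    (hsmall : ∀ (M : Type u) [L.Structure M],
      (∀ ψ ∈ T, ψ.Realize M) → ¬ Cardinal.mk M < L.card + Cardinal.aleph0)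
    (hcat : ∀ (M N : Type u) [L.Structure M] [L.Structure N],
      (∀ ψ ∈ T, ψ.Realize M) → (∀ ψ ∈ T, ψ.Realize N) →
      Cardinal.mk M = Cardinal.mk N → Nonempty (M ≃[L] N))
    (M N : Type u) [L.Structure M] [L.Structure N]
    (hM : ∀ ψ ∈ T, ψ.Realize M) (hN : ∀ ψ ∈ T, ψ.Realize N)
    (ψ₀ : ESOSentence L) (h0 : ψ₀.Realize M) : ψ₀.Realize N := by
  classical
  have hMcard : L.card + ℵ₀ ≤ #M := not_lt.1 (hsmall M hM)
  have hNcard : L.card + ℵ₀ ≤ #N := not_lt.1 (hsmall N hN)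
  haveI : Infinite M := Cardinal.infinite_iff.2 ((self_le_add_left _ _).trans hMcard)
  set ι := {p : ESOSentence L // p ∈ insert ψ₀ T} with hι
  let E : ι → ESOSentence L := Subtype.val
  have hE : ∀ i : ι, (E i).Realize M := by
    rintro ⟨p, hp⟩
    rcases Set.mem_insert_iff.1 hp with rfl | hp
    · exact h0
    · exact hM p hp
  choose W hW using hE
  letI : (extLang E).Structure M := extStructure E W
  have hcardι : #ι ≤ L.card + ℵ₀ :=
    (Cardinal.mk_subtype_le _).trans card_esoSentence_le
  have hcardL : (L.sum (extLang E)).card ≤ L.card + ℵ₀ := by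
    rw [card_sum]
    have h2 : (extLang E).card ≤ L.card + ℵ₀ := by
      refine (card_extLang_le E).trans ?_
      calc #ι * ℵ₀ ≤ (L.card + ℵ₀) * (L.card + ℵ₀) :=
            mul_le_mul' hcardι (self_le_add_left _ _)
        _ = L.card + ℵ₀ := Cardinal.mul_eq_self (self_le_add_left _ _)
    calc Cardinal.lift.{u} L.card + Cardinal.lift.{u} (extLang E).card
        ≤ (L.card + ℵ₀) + (L.card + ℵ₀) := by
          rw [Cardinal.lift_id, Cardinal.lift_id]
          exact add_le_add (self_le_add_right _ _) h2
      _ = L.card + ℵ₀ := Cardinal.add_eq_self ((self_le_add_left _ _))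
  have hmodel : ∃ M₀ : Theory.ModelType.{u, u, u} ((L.sum (extLang E)).completeTheory M),
      Infinite M₀ :=
    ⟨Theory.ModelType.of _ M, by exact inferInstanceAs (Infinite M)⟩
  obtain ⟨K, hKcard⟩ := Theory.exists_model_card_eq hmodel (#N)
    ((self_le_add_left _ _).trans hNcard)
    (by rw [Cardinal.lift_id, Cardinal.lift_id]; exact hcardL.trans hNcard)
  letI : L.Structure K := (LHom.sumInl : L →ᴸ (L.sum (extLang E))).reduct K
  have hKreal : ∀ i : ι, (E i).Realize K := by
    intro i
    have hMs : M ⊨ (extHom E i).onSentence (E i).toSentence := by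
      letI := relStructure (W i)
      haveI := extHom_isExpansionOn E W i
      exact (LHom.realize_onSentence (M := M) (φ := extHom E i) (E i).toSentence).2 (hW i)
    have hKs : K ⊨ (extHom E i).onSentence (E i).toSentence :=
      Theory.realize_sentence_of_mem ((L.sum (extLang E)).completeTheory M)
        ((Language.mem_completeTheory).2 hMs)
    refine ⟨extract E K i, ?_⟩
    letI := relStructure (extract E K i)
    haveI := extHom_isExpansionOn' E K i
    exact (LHom.realize_onSentence (M := K) (φ := extHom E i) (E i).toSentence).1 hKs
  have hKT : ∀ ψ ∈ T, ψ.Realize K :=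
    fun ψ hψ => hKreal ⟨ψ, Set.mem_insert_of_mem _ hψ⟩
  have hK0 : ψ₀.Realize K := hKreal ⟨ψ₀, Set.mem_insert _ _⟩
  obtain ⟨g⟩ := hcat K N hKT hN hKcard
  exact eso_realize_of_equiv g ψ₀ hK0

end LosVaughtAux


/-- **Łoś–Vaught test for existential second-order logic.**
If an ESO theory `T` has no models of cardinality strictly less than `|τ| + ℵ₀` and any
two models of `T` of the same cardinality are isomorphic, then `T` is complete: any two
models of `T` satisfy exactly the same ESO sentences. -/
theorem eso_los_vaught_test {L : FirstOrder.Language.{u, u}} (T : Set (ESOSentence L))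
    (hsmall : ∀ (M : Type u) [L.Structure M],
      (∀ ψ ∈ T, ψ.Realize M) → ¬ Cardinal.mk M < L.card + Cardinal.aleph0)
    (hcat : ∀ (M N : Type u) [L.Structure M] [L.Structure N],
      (∀ ψ ∈ T, ψ.Realize M) → (∀ ψ ∈ T, ψ.Realize N) →
      Cardinal.mk M = Cardinal.mk N → Nonempty (M ≃[L] N)) :
    ∀ (M N : Type u) [L.Structure M] [L.Structure N],
      (∀ ψ ∈ T, ψ.Realize M) → (∀ ψ ∈ T, ψ.Realize N) →
      ∀ ψ : ESOSentence L, (ψ.Realize M ↔ ψ.Realize N) := by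
  intro M N _ _ hM hN ψ
  exact ⟨fun h => eso_transfer T hsmall hcat M N hM hN ψ h,
    fun h => eso_transfer T hsmall hcat N M hN hM ψ h⟩

end TeamSem
end

section
/- Let f: 𝔄 → 𝔅 be a partial team isomorphism between τ-structures, let X ∈ dom(f) with X ⊆ A^n, and let φ(v₀,…,v_{n−1}) be an atomic first-order τ-formula (an equation t = t′ between τ-terms, or R(t₀,…,t_{k−1}) for a relation symbol R ∈ τ) with variables among v₀,…,v_{n−1}. Then every tuple in X satisfies φ in 𝔄 if and only if every tuple in f(X) satisfies φ in 𝔅. -/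
open FirstOrder Language Set

universe u v w x

namespace TeamSem

section Helpers

variable {L : FirstOrder.Language.{u, v}}

/-- The set of tuples whose `p`-th and `q`-th coordinates agree. -/
def eqSet {M : Type*} {n : ℕ} (p q : Fin n) : Set (Fin n → M) := {s | s p = s q}

/-- Preimage of a relation under a coordinate map. -/
def pre {M : Type*} {n m : ℕ} (κ : Fin n → Fin m) (X : Set (Fin n → M)) :
    Set (Fin m → M) := {s | s ∘ κ ∈ X}

/-- The graph of a term. -/
def termGraph (M : Type*) [L.Structure M] {n : ℕ} (t : L.Term (Fin n)) :
    Set (Fin (n + 1) → M) :=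
  {s | t.realize (fun j : Fin n => s j.castSucc) = s (Fin.last n)}

lemma eqSet_eq {M : Type*} {n : ℕ} (p q : Fin n) :
    (eqSet p q : Set (Fin n → M)) =
      teamProj (fun j => if j = p then Fin.natAdd n 0 else if j = q then Fin.natAdd n 1
          else Fin.castAdd 2 j)
        (teamProd (Set.univ : Set (Fin n → M)) (diag M)) := by
  ext s
  simp only [teamProj, Set.mem_image, eqSet, Set.mem_setOf_eq]
  constructor
  · intro hs
    refine ⟨Fin.append s ![s p, s p], ⟨⟨trivial, ?_⟩, funext fun j => ?_⟩⟩
    · show Fin.append s ![s p, s p] (Fin.natAdd n 0) = Fin.append s ![s p, s p] (Fin.natAdd n 1)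
      simp
    · by_cases hp : j = p
      · subst hp; simp
      · by_cases hq : j = q
        · subst hq; simp [hp, hs]
        · simp [hp, hq]
  · rintro ⟨b, ⟨-, hd⟩, rfl⟩
    have hd' : b (Fin.natAdd n 0) = b (Fin.natAdd n 1) := hd
    show (fun j => b _) p = (fun j => b _) q
    by_cases hqp : q = p
    · subst hqp; rfl
    · simp only [if_pos rfl, if_neg hqp]
      exact hd'

lemma pre_eq {M : Type*} {n m : ℕ} (κ : Fin n → Fin m) (X : Set (Fin n → M)) :
    pre κ X = teamProj (Fin.natAdd n)
      (teamProd X (Set.univ : Set (Fin m → M)) ∩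
        ⋂ i : Fin n, eqSet (Fin.castAdd m i) (Fin.natAdd n (κ i))) := by
  ext s
  constructor
  · intro hs
    refine ⟨Fin.append (s ∘ κ) s, ⟨⟨?_, trivial⟩, ?_⟩, funext fun j => Fin.append_right _ _ _⟩
    · show (fun i => Fin.append (s ∘ κ) s (Fin.castAdd m i)) ∈ X
      have : (fun i => Fin.append (s ∘ κ) s (Fin.castAdd m i)) = s ∘ κ :=
        funext fun i => Fin.append_left _ _ _
      rw [this]; exact hs
    · refine Set.mem_iInter.mpr fun i => ?_
      show Fin.append (s ∘ κ) s (Fin.castAdd m i) = Fin.append (s ∘ κ) s (Fin.natAdd n (κ i))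
      simp
  · rintro ⟨b, ⟨⟨hX, -⟩, heq⟩, rfl⟩
    have h1 : ∀ i, b (Fin.castAdd m i) = b (Fin.natAdd n (κ i)) :=
      fun i => Set.mem_iInter.mp heq i
    show (b ∘ Fin.natAdd n) ∘ κ ∈ X
    have : (b ∘ Fin.natAdd n) ∘ κ = fun i => b (Fin.castAdd m i) :=
      funext fun i => (h1 i).symm
    rw [this]; exact hX

/-- key lemma expressing the satisfaction set of a "generalized atom" via the closure
operations. -/
lemma satW_eq {M : Type*} [L.Structure M] {n l : ℕ} (us : Fin l → L.Term (Fin n))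
    (W : Set (Fin l → M)) :
    {s : Fin n → M | (fun i => (us i).realize s) ∈ W} =
      teamProj (Fin.castAdd l)
        ((⋂ i : Fin l,
            pre (Fin.snoc (fun j : Fin n => (Fin.castAdd l j : Fin (n + l)))
              (Fin.natAdd n i)) (termGraph M (us i))) ∩
          pre (Fin.natAdd n) W) := by
  ext s
  constructor
  · intro hs
    refine ⟨Fin.append s (fun i => (us i).realize s),
      ⟨Set.mem_iInter.mpr fun i => ?_, ?_⟩, funext fun j => Fin.append_left _ _ _⟩
    · show _ ∘ _ ∈ termGraph M (us i)
      show (us i).realize (fun j : Fin n => _) = _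
      have h1 : (fun j : Fin n =>
          (Fin.append s (fun i => (us i).realize s) ∘
            Fin.snoc (fun j : Fin n => (Fin.castAdd l j : Fin (n + l))) (Fin.natAdd n i))
            j.castSucc) = s := by
        funext j
        simp [Fin.snoc_castSucc]
      rw [h1]
      simp [Fin.snoc_last]
    · show _ ∘ Fin.natAdd n ∈ W
      have h2 : Fin.append s (fun i => (us i).realize s) ∘ Fin.natAdd n
          = fun i => (us i).realize s := funext fun i => Fin.append_right _ _ _
      rw [h2]; exact hs
  · rintro ⟨b, ⟨hT, hW⟩, rfl⟩
    have hkey : ∀ i, (us i).realize (b ∘ Fin.castAdd l) = b (Fin.natAdd n i) := by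
      intro i
      have h := Set.mem_iInter.mp hT i
      have h' : (us i).realize (fun j : Fin n =>
          (b ∘ Fin.snoc (fun j : Fin n => (Fin.castAdd l j : Fin (n + l)))
            (Fin.natAdd n i)) j.castSucc)
          = (b ∘ Fin.snoc (fun j : Fin n => (Fin.castAdd l j : Fin (n + l)))
            (Fin.natAdd n i)) (Fin.last n) := h
      have h1 : (fun j : Fin n =>
          (b ∘ Fin.snoc (fun j : Fin n => (Fin.castAdd l j : Fin (n + l)))
            (Fin.natAdd n i)) j.castSucc) = b ∘ Fin.castAdd l := by
        funext j; simp [Fin.snoc_castSucc]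
      rw [h1] at h'
      simpa [Fin.snoc_last] using h'
    show (fun i => (us i).realize (b ∘ Fin.castAdd l)) ∈ W
    have : (fun i => (us i).realize (b ∘ Fin.castAdd l)) = b ∘ Fin.natAdd n :=
      funext fun i => hkey i
    rw [this]; exact hW

lemma termGraph_var {M : Type*} [L.Structure M] {n : ℕ} (k : Fin n) :
    termGraph M (Term.var k : L.Term (Fin n)) = eqSet k.castSucc (Fin.last n) := by
  ext s; simp [termGraph, eqSet, Term.realize]

lemma termGraph_relabel {M : Type*} [L.Structure M] {n : ℕ} (t : L.Term (Fin n)) :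
    termGraph M (t.relabel (Fin.castSucc : Fin n → Fin (n + 1))) =
      pre (Fin.snoc (fun j : Fin n => (j.castSucc.castSucc : Fin (n + 2)))
        (Fin.last (n + 1))) (termGraph M t) := by
  ext s
  show (t.relabel _).realize _ = _ ↔ t.realize (fun j : Fin n => _) = _
  rw [Term.realize_relabel]
  rw [show ((fun j : Fin (n + 1) => s j.castSucc) ∘ (Fin.castSucc : Fin n → Fin (n + 1)))
      = fun j : Fin n => s j.castSucc.castSucc from rfl]
  have hκ1 : (fun j : Fin n =>
      (s ∘ Fin.snoc (fun j : Fin n => (j.castSucc.castSucc : Fin (n + 2)))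
        (Fin.last (n + 1))) j.castSucc) = fun j : Fin n => s j.castSucc.castSucc := by
    funext j; simp [Fin.snoc_castSucc]
  have hκ2 : (s ∘ Fin.snoc (fun j : Fin n => (j.castSucc.castSucc : Fin (n + 2)))
      (Fin.last (n + 1))) (Fin.last n) = s (Fin.last (n + 1)) := by
    simp [Fin.snoc_last]
  rw [hκ1, hκ2]

lemma termGraph_func {M : Type*} [L.Structure M] {n l : ℕ} (F : L.Functions l)
    (ts : Fin l → L.Term (Fin n)) :
    termGraph M (Term.func F ts) =
      {s : Fin (n + 1) → M | (fun i =>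
        ((Fin.snoc (fun i => (ts i).relabel (Fin.castSucc : Fin n → Fin (n + 1)))
          (Term.var (Fin.last n)) : Fin (l + 1) → L.Term (Fin (n + 1))) i).realize s)
        ∈ funGraph L M F} := by
  ext s
  show Term.realize _ (Term.func F ts) = _ ↔ _
  show _ ↔ Structure.funMap F (fun i => Term.realize s _) = Term.realize s _
  simp only [Fin.snoc_castSucc, Fin.snoc_last, Term.realize_relabel, Term.realize]
  rfl

lemma sat_equal_eq {M : Type*} [L.Structure M] {n : ℕ} (t1 t2 : L.Term (Fin n ⊕ Fin 0)) :
    {s : Fin n → M | Formula.Realize (Term.bdEqual t1 t2) s} =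
    {s : Fin n → M | (fun i =>
      ((![t1.relabel (Sum.elim id Fin.elim0), t2.relabel (Sum.elim id Fin.elim0)] :
        Fin 2 → L.Term (Fin n)) i).realize s) ∈ diag M} := by
  ext s
  have h : Sum.elim s (default : Fin 0 → M)
      = s ∘ (Sum.elim id Fin.elim0 : Fin n ⊕ Fin 0 → Fin n) := by
    funext x
    cases x with
    | inl a => rfl
    | inr b => exact b.elim0
  show (Term.bdEqual t1 t2).Realize s (default : Fin 0 → M) ↔ _
  rw [BoundedFormula.realize_bdEqual, h]
  show _ ↔ (fun i => Term.realize s _) 0 = (fun i => Term.realize s _) 1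
  simp [Matrix.cons_val_zero, Matrix.cons_val_one, Matrix.head_cons, Term.realize_relabel]

lemma sat_rel_eq {M : Type*} [L.Structure M] {n l : ℕ} (R : L.Relations l)
    (ts : Fin l → L.Term (Fin n ⊕ Fin 0)) :
    {s : Fin n → M | Formula.Realize (R.boundedFormula ts) s} =
    {s : Fin n → M | (fun i =>
      ((ts i).relabel (Sum.elim id Fin.elim0 : Fin n ⊕ Fin 0 → Fin n)).realize s)
      ∈ relSet L M R} := by
  ext s
  have h : Sum.elim s (default : Fin 0 → M)
      = s ∘ (Sum.elim id Fin.elim0 : Fin n ⊕ Fin 0 → Fin n) := by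
    funext x
    cases x with
    | inl a => rfl
    | inr b => exact b.elim0
  show (R.boundedFormula ts).Realize s (default : Fin 0 → M) ↔ _
  rw [BoundedFormula.realize_rel, h]
  show _ ↔ Structure.RelMap R _
  simp [Term.realize_relabel]

end Helpers

namespace PartialTeamMap

variable {L : FirstOrder.Language.{u, v}} {A : Type w} {B : Type x}
  [L.Structure A] [L.Structure B] {f : PartialTeamMap L A B}

/-- `S` is in the domain of `f` and is mapped to `T`. -/
def Good (f : PartialTeamMap L A B) {n : ℕ} (S : Set (Fin n → A)) (T : Set (Fin n → B)) :
    Prop :=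
  S ∈ f.dom n ∧ f.toFun n S = T

lemma good_univ (hf : f.IsIso) (n : ℕ) :
    f.Good (Set.univ : Set (Fin n → A)) Set.univ :=
  ⟨f.dom_closed.univ_mem n, (hf.univ_iff n _ (f.dom_closed.univ_mem n)).mp rfl⟩

lemma good_diag (hf : f.IsIso) : f.Good (diag A) (diag B) :=
  ⟨f.dom_closed.diag_mem, hf.map_diag⟩

lemma good_rel (hf : f.IsIso) {n : ℕ} (R : L.Relations n) :
    f.Good (relSet L A R) (relSet L B R) :=
  ⟨f.dom_closed.rel_mem n R, hf.map_rel n R⟩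

lemma good_funGraph (hf : f.IsIso) {n : ℕ} (F : L.Functions n) :
    f.Good (funGraph L A F) (funGraph L B F) :=
  ⟨f.dom_closed.graph_mem n F, hf.map_graph n F⟩

lemma good_prod (hf : f.IsIso) {n m : ℕ} {S : Set (Fin n → A)} {T : Set (Fin n → B)}
    {S' : Set (Fin m → A)} {T' : Set (Fin m → B)} (h : f.Good S T) (h' : f.Good S' T') :
    f.Good (teamProd S S') (teamProd T T') :=
  ⟨f.dom_closed.prod_mem n m S S' h.1 h'.1, by
    rw [hf.map_prod n m S S' h.1 h'.1, h.2, h'.2]⟩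

lemma good_proj (hf : f.IsIso) {n m : ℕ} (ι : Fin m → Fin n) {S : Set (Fin n → A)}
    {T : Set (Fin n → B)} (h : f.Good S T) : f.Good (teamProj ι S) (teamProj ι T) :=
  ⟨f.dom_closed.proj_mem n m ι S h.1, by rw [hf.map_proj n m ι S h.1, h.2]⟩

lemma good_inter (hf : f.IsIso) {n : ℕ} {S S' : Set (Fin n → A)} {T T' : Set (Fin n → B)}
    (h : f.Good S T) (h' : f.Good S' T') : f.Good (S ∩ S') (T ∩ T') := by
  obtain ⟨hS, rfl⟩ := h
  obtain ⟨hS', rfl⟩ := h'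
  have hSS' : S ∩ S' ∈ f.dom n := f.dom_closed.inter_mem n S S' hS hS'
  refine ⟨hSS', ?_⟩
  obtain ⟨Z, hZ, hZ2⟩ := f.ran_closed.inter_mem n _ _ ⟨S, hS, rfl⟩ ⟨S', hS', rfl⟩
  apply subset_antisymm
  · exact Set.subset_inter ((hf.subset_iff n _ S hSS' hS).mp Set.inter_subset_left)
      ((hf.subset_iff n _ S' hSS' hS').mp Set.inter_subset_right)
  · rw [← hZ2]
    refine (hf.subset_iff n Z (S ∩ S') hZ hSS').mp (Set.subset_inter ?_ ?_)
    · exact (hf.subset_iff n Z S hZ hS).mpr (hZ2 ▸ Set.inter_subset_left)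
    · exact (hf.subset_iff n Z S' hZ hS').mpr (hZ2 ▸ Set.inter_subset_right)

lemma good_iInter (hf : f.IsIso) {n : ℕ} : ∀ {k : ℕ} {S : Fin k → Set (Fin n → A)}
    {T : Fin k → Set (Fin n → B)}, (∀ i, f.Good (S i) (T i)) →
    f.Good (⋂ i, S i) (⋂ i, T i) := by
  intro k
  induction k with
  | zero =>
    intro S T _
    rw [Set.iInter_of_empty, Set.iInter_of_empty]
    exact good_univ hf n
  | succ k ih =>
    intro S T h
    have e1 : (⋂ i, S i) = S 0 ∩ ⋂ i : Fin k, S i.succ := by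
      ext x; simp [Set.mem_iInter, Fin.forall_fin_succ]
    have e2 : (⋂ i, T i) = T 0 ∩ ⋂ i : Fin k, T i.succ := by
      ext x; simp [Set.mem_iInter, Fin.forall_fin_succ]
    rw [e1, e2]
    exact good_inter hf (h 0) (ih fun i => h i.succ)

lemma good_eqSet (hf : f.IsIso) {n : ℕ} (p q : Fin n) :
    f.Good (eqSet p q : Set (Fin n → A)) (eqSet p q : Set (Fin n → B)) := by
  rw [eqSet_eq (M := A), eqSet_eq (M := B)]
  exact good_proj hf _ (good_prod hf (good_univ hf n) (good_diag hf))

lemma good_pre (hf : f.IsIso) {n m : ℕ} (κ : Fin n → Fin m) {S : Set (Fin n → A)}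
    {T : Set (Fin n → B)} (h : f.Good S T) : f.Good (pre κ S) (pre κ T) := by
  rw [pre_eq, pre_eq]
  exact good_proj hf _ (good_inter hf (good_prod hf h (good_univ hf m))
    (good_iInter hf fun i => good_eqSet hf _ _))

lemma good_satW (hf : f.IsIso) {n l : ℕ} (us : Fin l → L.Term (Fin n))
    {WA : Set (Fin l → A)} {WB : Set (Fin l → B)} (hW : f.Good WA WB)
    (hus : ∀ i, f.Good (termGraph A (us i)) (termGraph B (us i))) :
    f.Good {s : Fin n → A | (fun i => (us i).realize s) ∈ WA}
      {s : Fin n → B | (fun i => (us i).realize s) ∈ WB} := by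
  rw [satW_eq (M := A), satW_eq (M := B)]
  exact good_proj hf _ (good_inter hf (good_iInter hf fun i => good_pre hf _ (hus i))
    (good_pre hf _ hW))

lemma good_termGraph (hf : f.IsIso) {n : ℕ} (t : L.Term (Fin n)) :
    f.Good (termGraph A t) (termGraph B t) := by
  induction t with
  | var k =>
    rw [termGraph_var, termGraph_var]
    exact good_eqSet hf _ _
  | @func l F ts ih =>
    rw [termGraph_func, termGraph_func]
    refine good_satW hf _ (good_funGraph hf F) fun i => ?_
    refine Fin.lastCases ?_ (fun j => ?_) i
    · simp only [Fin.snoc_last]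
      rw [termGraph_var, termGraph_var]
      exact good_eqSet hf _ _
    · simp only [Fin.snoc_castSucc]
      rw [termGraph_relabel, termGraph_relabel]
      exact good_pre hf _ (ih j)

end PartialTeamMap

end TeamSem

namespace TeamSem

/-- **Partial team isomorphisms preserve first-order atomic formulas** (in the team
semantics sense): for `X ∈ dom f` of arity `n` and an atomic first-order formula
`φ(v₀, …, v_{n-1})`, every tuple of `X` satisfies `φ` in `A` iff every tuple of
`f(X)` satisfies `φ` in `B`. -/
theorem partialTeamIso_preserves_atomic
    {L : FirstOrder.Language.{u, v}} {A : Type w} {B : Type x}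
    [L.Structure A] [L.Structure B]
    (f : PartialTeamMap L A B) (hf : f.IsIso)
    (n : ℕ) (X : Set (Fin n → A)) (hX : X ∈ f.dom n)
    (φ : L.Formula (Fin n)) (hφ : FirstOrder.Language.BoundedFormula.IsAtomic φ) :
    (∀ s ∈ X, φ.Realize s) ↔ ∀ t ∈ f.toFun n X, φ.Realize t := by
  classical
  have good : f.Good {s : Fin n → A | φ.Realize s} {t : Fin n → B | φ.Realize t} := by
    cases hφ with
    | equal t1 t2 =>
      rw [show {s : Fin n → A | Formula.Realize (Term.bdEqual t1 t2) s} = _ from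
          sat_equal_eq t1 t2,
        show {s : Fin n → B | Formula.Realize (Term.bdEqual t1 t2) s} = _ from
          sat_equal_eq t1 t2]
      refine PartialTeamMap.good_satW hf _ (PartialTeamMap.good_diag hf) fun i => ?_
      fin_cases i <;>
        simpa using PartialTeamMap.good_termGraph hf (L := L) (A := A) (B := B) _
    | @rel l R ts =>
      rw [show {s : Fin n → A | Formula.Realize (R.boundedFormula ts) s} = _ from
          sat_rel_eq R ts,
        show {s : Fin n → B | Formula.Realize (R.boundedFormula ts) s} = _ from
          sat_rel_eq R ts]
      exact PartialTeamMap.good_satW hf _ (PartialTeamMap.good_rel hf R)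
        fun i => PartialTeamMap.good_termGraph hf _
  have h2 := hf.subset_iff n X _ hX good.1
  rw [good.2] at h2
  exact h2
end TeamSem
end

section
/- Let f: 𝔄 → 𝔅 be an elementary team embedding between τ-structures and let n < ω. Then the restriction of f to subsets of A^n is an elementary embedding from the Boolean algebra (Pow(A^n), ∪, ∩, complement, ∅, A^n) to the Boolean algebra (Pow(B^n), ∪, ∩, complement, ∅, B^n), where elementarity is with respect to the first-order language of Boolean algebras. -/
open FirstOrder Language Set

universe u v w x

namespace TeamSem

/-- The first-order language of Boolean algebras: two constant symbols `⊥, ⊤`, one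
unary function symbol `¬`, and two binary function symbols `∨, ∧`. -/
def boolLang : FirstOrder.Language where
  Functions
    | 0 => Bool
    | 1 => Unit
    | 2 => Bool
    | _ + 3 => Empty
  Relations := fun _ => Empty

/-- A Boolean algebra regarded as a structure for the language of Boolean algebras
in the obvious way. -/
instance boolStructure (α : Type w) [BooleanAlgebra α] : boolLang.Structure α where
  funMap {n} :=
    match n with
    | 0 => fun b _ => bif b then ⊤ else ⊥
    | 1 => fun _ v => (v 0)ᶜ
    | 2 => fun b v => bif b then v 0 ⊔ v 1 else v 0 ⊓ v 1
    | _ + 3 => fun e _ => e.elim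
  RelMap := fun r _ => r.elim

/-!
For a finite family `x` of subsets of `S`, the atoms of the Boolean subalgebra of `Set S` it
generates are the cells `{s | (s ∈ x i ↔ ε i) for all i}`. The first-order theory of `Set S`
with parameters `x` is determined by the sizes of these cells, counted in `ℕ∞`: in the
back-and-forth argument a new set `Z` on one side is answered by a set `W` that splits every
cell in the same sizes as `Z` does.

An elementary team embedding `f` preserves these cell sizes on each arity, because
"the cell `ε` of the relations `X i` has at least `m` elements" is a first-order sentence
about the `X i`. Elementarity only applies to nonempty relations, but `f ∅ = ∅`, so
empty members of the family can be discarded first.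
-/

section Encard

variable {T : Type*}

theorem exists_infinite_subset_infinite_sdiff {D : Set T} (hD : D.Infinite) :
    ∃ W ⊆ D, W.Infinite ∧ (D \ W).Infinite := by
  obtain ⟨g, hg, hgD⟩ : ∃ g : ℕ ⊕ ℕ → T, Function.Injective g ∧ ∀ i, g i ∈ D :=
    ⟨fun i => hD.natEmbedding _ (Equiv.natSumNatEquivNat i),
      fun i j h => Equiv.natSumNatEquivNat.injective ((hD.natEmbedding _).injective
        (Subtype.coe_injective h)), fun i => Subtype.prop _⟩
  refine ⟨range (g ∘ Sum.inl), range_subset_iff.2 fun _ => hgD _,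
    infinite_range_of_injective (hg.comp Sum.inl_injective),
    (infinite_range_of_injective (hg.comp Sum.inr_injective)).mono ?_⟩
  rintro _ ⟨j, rfl⟩
  exact ⟨hgD _, fun ⟨i, hi⟩ => Sum.inl_ne_inr (hg hi)⟩

theorem exists_subset_encard_eq_and_encard_sdiff_eq {D : Set T} {a b : ℕ∞}
    (h : D.encard = a + b) : ∃ W ⊆ D, W.encard = a ∧ (D \ W).encard = b := by
  have of_ne_top : ∀ {a b : ℕ∞}, a ≠ ⊤ → D.encard = a + b →
      ∃ W ⊆ D, W.encard = a ∧ (D \ W).encard = b := by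
    intro a b ha h
    obtain ⟨W, hWD, hW⟩ := exists_subset_encard_eq (h ▸ le_self_add : a ≤ D.encard)
    have hsplit := encard_sdiff_add_encard_of_subset hWD
    rw [hW, h, add_comm a] at hsplit
    exact ⟨W, hWD, hW, WithTop.add_right_cancel ha hsplit⟩
  by_cases ha : a = ⊤
  · by_cases hb : b = ⊤
    · obtain ⟨W, hWD, hW, hDW⟩ :=
        exists_infinite_subset_infinite_sdiff (encard_eq_top_iff.1 (by rw [h, ha, top_add]))
      exact ⟨W, hWD, ha ▸ hW.encard_eq, hb ▸ hDW.encard_eq⟩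
    · obtain ⟨W, hWD, hW, hDW⟩ := of_ne_top hb (h.trans (add_comm a b))
      exact ⟨D \ W, sdiff_subset, hDW, by rwa [sdiff_sdiff_cancel_left hWD]⟩
  · exact of_ne_top ha h

theorem natCast_le_encard_iff_exists_injective {C : Set T} {m : ℕ} :
    (m : ℕ∞) ≤ C.encard ↔ ∃ g : Fin m → T, Function.Injective g ∧ ∀ j, g j ∈ C := by
  constructor
  · intro h
    rcases isEmpty_or_nonempty T with _ | _
    · obtain rfl : m = 0 := by simpa [eq_empty_of_isEmpty C] using h
      exact ⟨finZeroElim, fun i => i.elim0, fun i => i.elim0⟩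
    · obtain ⟨g, hgC, hg⟩ := (finite_univ (α := Fin m)).exists_injOn_of_encard_le (t := C)
        (by simpa using h)
      exact ⟨g, injOn_univ.1 hg, fun j => hgC (mem_univ j)⟩
  · rintro ⟨g, hg, hgC⟩
    simpa using encard_le_encard_of_injOn (s := univ) (fun j _ => hgC j) hg.injOn

end Encard

section Fibers

variable {ι S T : Type*}

def FiberEncardEq (p : S → ι) (q : T → ι) : Prop :=
  ∀ i, (p ⁻¹' {i}).encard = (q ⁻¹' {i}).encard

namespace FiberEncardEq

variable {p : S → ι} {q : T → ι}

theorem symm (h : FiberEncardEq p q) : FiberEncardEq q p := fun i => (h i).symm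

theorem range_eq (h : FiberEncardEq p q) : range p = range q := by
  ext i
  rw [← preimage_singleton_nonempty, ← preimage_singleton_nonempty, ← encard_ne_zero,
    ← encard_ne_zero, h i]

theorem of_comp {κ : Type*} {ρ : ι → κ} (hρ : InjOn ρ (range p ∪ range q))
    (h : FiberEncardEq (ρ ∘ p) (ρ ∘ q)) : FiberEncardEq p q := by
  intro i
  by_cases hi : i ∈ range p ∪ range q
  · have hp : p ⁻¹' {i} = (ρ ∘ p) ⁻¹' {ρ i} := by
      ext s
      exact (hρ.eq_iff (Or.inl (mem_range_self s)) hi).symm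
    have hq : q ⁻¹' {i} = (ρ ∘ q) ⁻¹' {ρ i} := by
      ext t
      exact (hρ.eq_iff (Or.inr (mem_range_self t)) hi).symm
    rw [hp, hq]
    exact h (ρ i)
  · rw [mem_union, not_or, ← preimage_singleton_eq_empty, ← preimage_singleton_eq_empty] at hi
    rw [hi.1, hi.2, encard_empty, encard_empty]

theorem exists_refine (h : FiberEncardEq p q) (Z : Set S) :
    ∃ W : Set T, FiberEncardEq (fun s => (p s, s ∈ Z)) (fun t => (q t, t ∈ W)) := by
  choose W hWq hWZ hWZc using fun i => exists_subset_encard_eq_and_encard_sdiff_eq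
    ((h i).symm.trans (by rw [add_comm, encard_sdiff_add_encard_inter (p ⁻¹' {i}) Z]))
  refine ⟨⋃ i, W i, ?_⟩
  have fiber_W : ∀ i, q ⁻¹' {i} ∩ ⋃ j, W j = W i := fun i => by
    ext t
    simp only [mem_inter_iff, mem_iUnion, mem_preimage, mem_singleton_iff]
    exact ⟨fun ⟨hi, j, hj⟩ => by rwa [← hi, hWq j hj], fun ht => ⟨hWq i ht, i, ht⟩⟩
  rintro ⟨i, P⟩
  by_cases hP : P
  · have hS : (fun s => (p s, s ∈ Z)) ⁻¹' {(i, P)} = p ⁻¹' {i} ∩ Z := by ext s; simp [hP]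
    have hT : (fun t => (q t, t ∈ ⋃ j, W j)) ⁻¹' {(i, P)} = W i := by
      rw [← fiber_W]; ext t; simp [hP]
    rw [hS, hT]
    exact (hWZ i).symm
  · have hS : (fun s => (p s, s ∈ Z)) ⁻¹' {(i, P)} = p ⁻¹' {i} \ Z := by ext s; simp [hP]
    have hT : (fun t => (q t, t ∈ ⋃ j, W j)) ⁻¹' {(i, P)} = q ⁻¹' {i} \ W i := by
      rw [← fiber_W]; ext t; simp [hP]
    rw [hS, hT]
    exact (hWZc i).symm

end FiberEncardEq

end Fibers

section BooleanTerms

variable {α β γ : Type*}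

theorem realize_boolLang_term_comp [BooleanAlgebra α] [BooleanAlgebra β]
    (g : BoundedLatticeHom α β) (t : boolLang.Term γ) (v : γ → α) :
    t.realize (g ∘ v) = g (t.realize v) := by
  induction t with
  | var i => rfl
  | @func l F ts ih =>
    match l, F with
    | 0, b => cases b <;> simp [Term.realize, Structure.funMap]
    | 1, _ => simp [Term.realize, Structure.funMap, ih]
    | 2, b => cases b <;> simp [Term.realize, Structure.funMap, ih]
    | _ + 3, e => exact e.elim

def memBoundedLatticeHom (s : α) : BoundedLatticeHom (Set α) Prop where
  toFun X := s ∈ X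
  map_sup' _ _ := rfl
  map_inf' _ _ := rfl
  map_top' := rfl
  map_bot' := rfl

-- The cells of the Boolean subalgebra generated by `u` are the fibres of `pattern u`.
def pattern (u : γ → Set α) (s : α) : γ → Prop := fun i => s ∈ u i

theorem mem_realize_iff_realize_pattern (t : boolLang.Term γ) (u : γ → Set α) (s : α) :
    s ∈ t.realize u ↔ t.realize (pattern u s) :=
  Iff.of_eq (realize_boolLang_term_comp (memBoundedLatticeHom s) t u).symm

theorem realize_eq_iff_forall_pattern (t₁ t₂ : boolLang.Term γ) (u : γ → Set α) :
    t₁.realize u = t₂.realize u ↔ ∀ π ∈ range (pattern u), t₁.realize π ↔ t₂.realize π := by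
  simp only [Set.ext_iff, forall_mem_range, mem_realize_iff_realize_pattern]

end BooleanTerms

section EhrenfeuchtFraisse

variable {S T : Type*}

theorem FiberEncardEq.exists_snoc {α : Type*} {m : ℕ} {x : α → Set S} {v : Fin m → Set S}
    {y : α → Set T} {w : Fin m → Set T}
    (h : FiberEncardEq (pattern (Sum.elim x v)) (pattern (Sum.elim y w))) (Z : Set S) :
    ∃ W, FiberEncardEq (pattern (Sum.elim x (Fin.snoc v Z)))
      (pattern (Sum.elim y (Fin.snoc w W))) := by
  let ρ : (α ⊕ Fin (m + 1) → Prop) → (α ⊕ Fin m → Prop) × Prop :=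
    fun π => (π ∘ Sum.map id Fin.castSucc, π (Sum.inr (Fin.last m)))
  have hρ : Function.Injective ρ := by
    intro π π' hπ
    simp only [ρ, Prod.mk.injEq] at hπ
    funext i
    rcases i with a | j
    · exact congrFun hπ.1 (Sum.inl a)
    · induction j using Fin.lastCases with
      | last => exact hπ.2
      | cast j => exact congrFun hπ.1 (Sum.inr j)
  obtain ⟨W, hW⟩ := h.exists_refine Z
  refine ⟨W, FiberEncardEq.of_comp hρ.injOn ?_⟩
  convert hW using 2 <;> simp [ρ, pattern, funext_iff]

theorem realize_iff_of_fiberEncardEq {α : Type*} {m : ℕ} (φ : boolLang.BoundedFormula α m)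
    {x : α → Set S} {v : Fin m → Set S} {y : α → Set T} {w : Fin m → Set T}
    (h : FiberEncardEq (pattern (Sum.elim x v)) (pattern (Sum.elim y w))) :
    φ.Realize x v ↔ φ.Realize y w := by
  induction φ with
  | falsum => rfl
  | equal t₁ t₂ =>
    simp only [BoundedFormula.Realize, realize_eq_iff_forall_pattern, h.range_eq]
  | rel R => exact R.elim
  | imp φ ψ ihφ ihψ => exact imp_congr (ihφ h) (ihψ h)
  | all φ ih =>
    simp only [BoundedFormula.realize_all]
    constructor
    · intro hφ W
      obtain ⟨Z, hZ⟩ := h.symm.exists_snoc W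
      exact (ih hZ.symm).1 (hφ Z)
    · intro hφ Z
      obtain ⟨W, hW⟩ := h.exists_snoc Z
      exact (ih hW).2 (hφ W)

def elementaryEmbeddingOfFiberEncardEq (g : Set S → Set T)
    (hg : ∀ (k : ℕ) (x : Fin k → Set S), FiberEncardEq (pattern x) (pattern (g ∘ x))) :
    Set S ↪ₑ[boolLang] Set T where
  toFun := g
  map_formula' k φ x := by
    have hρ : Function.Injective fun π : Fin k ⊕ Fin 0 → Prop => π ∘ Sum.inl := by
      intro π π' hπ
      funext i
      rcases i with a | j
      · exact congrFun hπ a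
      · exact j.elim0
    exact (realize_iff_of_fiberEncardEq φ (FiberEncardEq.of_comp hρ.injOn (hg k x))).symm

end EhrenfeuchtFraisse

section Counting

def freshRel (L : FirstOrder.Language.{u, v}) {k : ℕ} {ar : Fin k → ℕ} (i : Fin k) :
    (L.sum (relLang k ar)).Relations (ar i) :=
  Sum.inr ⟨i, rfl⟩

theorem relMap_freshRel {L : FirstOrder.Language.{u, v}} {k : ℕ} {ar : Fin k → ℕ} {M : Type w}
    [L.Structure M] (S : ∀ i : Fin k, Set (Fin (ar i) → M)) (i : Fin k) (v : Fin (ar i) → M) :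
    letI := relStructure S
    Structure.RelMap (freshRel L i) v ↔ v ∈ S i :=
  Iff.rfl

noncomputable def fiberCardGe (L : FirstOrder.Language.{u, v}) (k n m : ℕ) (ε : Fin k → Prop) :
    (L.sum (relLang k fun _ => n)).Sentence :=
  let tuple (j : Fin m) (c : Fin n) :
      (L.sum (relLang k fun _ => n)).Term (Empty ⊕ Fin m × Fin n) :=
    Term.var (Sum.inr (j, c))
  Formula.iExs (Fin m × Fin n) <|
    (Formula.iInf fun p : Fin m × {i // ε i} => (freshRel L p.2.1).formula (tuple p.1)) ⊓
    (Formula.iInf fun p : Fin m × {i // ¬ε i} => ∼((freshRel L p.2.1).formula (tuple p.1))) ⊓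
    Formula.iInf fun p : {p : Fin m × Fin m // p.1 ≠ p.2} =>
      ∼(Formula.iInf fun c : Fin n => (tuple p.1.1 c).equal (tuple p.1.2 c))

theorem realizeWith_fiberCardGe {L : FirstOrder.Language.{u, v}} {A : Type w} [L.Structure A]
    {k n m : ℕ} (ε : Fin k → Prop) (S : Fin k → Set (Fin n → A)) :
    RealizeWith A (fiberCardGe L k n m ε) S ↔ (m : ℕ∞) ≤ (pattern S ⁻¹' {ε}).encard := by
  let := relStructure S
  rw [natCast_le_encard_iff_exists_injective, RealizeWith, fiberCardGe, Sentence.Realize,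
    Formula.realize_iExs]
  refine (Equiv.curry (Fin m) (Fin n) A).exists_congr fun i => ?_
  simp only [Formula.realize_inf, Formula.realize_iInf, Formula.realize_rel,
    Formula.realize_not, Formula.realize_equal, relMap_freshRel, Term.realize_var, Sum.elim_inr,
    Function.Injective, mem_preimage, mem_singleton_iff, pattern, funext_iff, eq_iff_iff,
    Prod.forall, Subtype.forall, Equiv.curry_apply, Function.curry_apply]
  rw [and_comm]
  refine and_congr (by simp only [ne_eq, not_imp_not]) ?_
  simp only [not_imp_not, ← forall_and, ← iff_def']
  rfl

end Counting

namespace PartialTeamMap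

variable {L : FirstOrder.Language.{u, v}} {A : Type w} {B : Type x}
  [L.Structure A] [L.Structure B] (f : PartialTeamMap L A B)

theorem fiberEncardEq_pattern_of_nonempty (hTot : f.Total) (hEl : f.IsElementary) {n k : ℕ}
    {X : Fin k → Set (Fin n → A)} (hX : ∀ i, (X i).Nonempty) :
    FiberEncardEq (pattern X) (pattern (f.toFun n ∘ X)) := fun ε =>
  ENat.eq_of_forall_natCast_le_iff fun m => by
    rw [← realizeWith_fiberCardGe (L := L), ← realizeWith_fiberCardGe (L := L)]
    exact hEl k (fun _ => n) (fiberCardGe L k n m ε) X (fun i => hTot n ▸ mem_univ _) hX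

theorem fiberEncardEq_pattern (hTot : f.Total) (hEl : f.IsElementary) {n k : ℕ}
    (X : Fin k → Set (Fin n → A)) : FiberEncardEq (pattern X) (pattern (f.toFun n ∘ X)) := by
  obtain ⟨k', r, hr⟩ := (toFinite {i | (X i).Nonempty}).fin_embedding
  have hXr : ∀ j, (X (r j)).Nonempty := fun j =>
    (hr ▸ mem_range_self j : r j ∈ {i | (X i).Nonempty})
  refine FiberEncardEq.of_comp (ρ := fun π => π ∘ r) ?_
    (f.fiberEncardEq_pattern_of_nonempty hTot hEl hXr)
  -- Indices outside `range r` carry empty relations on both sides, since `f ∅ = ∅`.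
  have mem_range_r : ∀ π ∈ range (pattern X) ∪ range (pattern (f.toFun n ∘ X)),
      ∀ i, π i → i ∈ range r := by
    rintro π (⟨s, rfl⟩ | ⟨t, rfl⟩) i hi
    · rw [hr]; exact ⟨s, hi⟩
    · rw [hr]
      by_contra hXi
      rw [mem_ofPred, not_nonempty_iff_eq_empty] at hXi
      simp [pattern, hXi, f.map_empty] at hi
  intro π hπ π' hπ' h
  have h' : ∀ j, π (r j) = π' (r j) := congrFun h
  funext i
  refine propext ⟨fun hi => ?_, fun hi => ?_⟩
  · obtain ⟨j, rfl⟩ := mem_range_r π hπ i hi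
    rwa [← h']
  · obtain ⟨j, rfl⟩ := mem_range_r π' hπ' i hi
    rwa [h']

end PartialTeamMap

/-- **An elementary team embedding restricts, on each arity, to an elementary
embedding of powerset Boolean algebras** `Pow(Aⁿ) → Pow(Bⁿ)`. -/
theorem elemTeamEmbedding_boolean_elementary
    {L : FirstOrder.Language.{u, v}} {A : Type w} {B : Type x}
    [L.Structure A] [L.Structure B]
    (f : PartialTeamMap L A B) (hTot : f.Total) (hEl : f.IsElementary) (n : ℕ) :
    ∃ e : (Set (Fin n → A)) ↪ₑ[boolLang] (Set (Fin n → B)),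
      ∀ X : Set (Fin n → A), e X = f.toFun n X :=
  ⟨elementaryEmbeddingOfFiberEncardEq (f.toFun n) fun _ X => f.fiberEncardEq_pattern hTot hEl X,
    fun _ => rfl⟩

end TeamSem
end

section
/- Let C and D be infinite atomic Boolean algebras, regarded as structures for the first-order language of Boolean algebras. Then a map g: C → D is an elementary embedding if and only if g is an embedding (an injective map preserving ∨, ∧, ¬, ⊥ and ⊤) that maps atoms to atoms. -/
/-!
An atom `a` evaluates terms like the homomorphism `y ↦ decide (a ≤ y)` to `Bool`; hence in an
atomic algebra an equation between terms in a tuple `x` holds iff it holds in `Bool` at the sign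
pattern of every nonzero cell `⨅ i, ±xᵢ`. The truth of a formula is therefore determined by the
numbers of atoms below the cells of its free variables, counted up to a threshold depending on the
formula: if these counts agree up to `2N + 2` for tuples `x` and `y`, then every new element `c`
adjoined to `x` has a partner `d` adjoined to `y` with counts agreeing up to `N`, obtained by
splitting the atoms of each cell of `y` in the proportions in which `c` splits the matching cell
of `x`. A lattice embedding that maps atoms to atoms preserves the number of atoms below each
element (an element with finitely many atoms is their join), so it preserves all formulas.
-/

open FirstOrder Language Set

universe u v w x

namespace ENat

lemma natCast_min (m n : ℕ) : ((min m n : ℕ) : ℕ∞) = min (m : ℕ∞) n :=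
  Nat.mono_cast.map_min

lemma exists_add_eq_min_eq_of_le {N p : ℕ} {q b : ℕ∞}
    (h : min (2 * N + 2 : ℕ∞) (p + q) = min (2 * N + 2 : ℕ∞) b) (hp : p ≤ N) :
    ∃ r, (p : ℕ∞) + r = b ∧ min (N : ℕ∞) r = min (N : ℕ∞) q := by
  refine ⟨b - p, ?_, ?_⟩
  all_goals
    induction q using recTopCoe <;> induction b using recTopCoe <;>
      (try simp only [top_sub_natCast, add_top, min_top_right] at *) <;>
      norm_cast at * <;> simp only [← natCast_min, Nat.cast_inj] at * <;> omega

lemma exists_add_eq_min_eq (N : ℕ) {p q b : ℕ∞}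
    (h : min (2 * N + 2 : ℕ∞) (p + q) = min (2 * N + 2 : ℕ∞) b) :
    ∃ k r : ℕ∞, k + r = b ∧ (k ≠ ⊤ ∨ r ≠ ⊤) ∧
      min (N : ℕ∞) k = min (N : ℕ∞) p ∧ min (N : ℕ∞) r = min (N : ℕ∞) q := by
  by_cases hp : p ≤ N
  · lift p to ℕ using ne_top_of_le_ne_top (natCast_ne_top N) hp
    obtain ⟨r, hr, hrq⟩ := exists_add_eq_min_eq_of_le h (mod_cast hp)
    exact ⟨p, r, hr, .inl (natCast_ne_top p), rfl, hrq⟩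
  by_cases hq : q ≤ N
  · lift q to ℕ using ne_top_of_le_ne_top (natCast_ne_top N) hq
    obtain ⟨r, hr, hrp⟩ := exists_add_eq_min_eq_of_le (add_comm p q ▸ h) (mod_cast hq)
    exact ⟨r, q, add_comm r q ▸ hr, .inr (natCast_ne_top q), hrp, rfl⟩
  refine ⟨(N + 1 : ℕ), b - (N + 1 : ℕ), ?_, .inl (natCast_ne_top _), ?_, ?_⟩
  all_goals
    rw [not_le] at hp hq
    induction p using recTopCoe <;> induction q using recTopCoe <;>
      induction b using recTopCoe <;>
      (try simp only [top_sub_natCast, add_top, top_add, min_top_right] at *) <;>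
      norm_cast at * <;> simp only [← natCast_min, Nat.cast_inj] at * <;> omega

end ENat

section AtomCount

variable {α β ι : Type*} [BooleanAlgebra α] [BooleanAlgebra β] {a b c : α}

lemma IsAtom.le_compl_iff (ha : IsAtom a) : a ≤ bᶜ ↔ ¬ a ≤ b := by
  rw [le_compl_iff_disjoint_right, ha.not_le_iff_disjoint]

lemma IsAtom.supPrime (ha : IsAtom a) : SupPrime a := by
  refine ⟨fun hmin => ha.1 hmin.eq_bot, fun b c hbc => or_iff_not_imp_left.2 fun hb => ?_⟩
  calc a ≤ (b ⊔ c) ⊓ bᶜ := le_inf hbc (ha.le_compl_iff.2 hb)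
    _ = c ⊓ bᶜ := by rw [inf_sup_right, inf_compl_self, bot_sup_eq]
    _ ≤ c := inf_le_left

def atomsBelow (c : α) : Set α := {a | IsAtom a ∧ a ≤ c}

noncomputable def atomCount (c : α) : ℕ∞ := (atomsBelow c).encard

lemma atomsBelow_finset_sup {s : Finset ι} {f : ι → α} (hs : ∀ i ∈ s, IsAtom (f i)) :
    atomsBelow (s.sup f) = f '' s := by
  ext b
  refine ⟨fun ⟨hb, hle⟩ => ?_, ?_⟩
  · obtain ⟨i, hi, hbi⟩ := hb.supPrime.le_finset_sup.1 hle
    exact ⟨i, hi, ((hs i hi).le_iff.1 hbi).resolve_left hb.1 |>.symm⟩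
  · rintro ⟨i, hi, rfl⟩
    exact ⟨hs i hi, Finset.le_sup hi⟩

lemma atomCount_eq_zero [IsAtomic α] : atomCount c = 0 ↔ c = ⊥ := by
  rw [atomCount, Set.encard_eq_zero, Set.eq_empty_iff_forall_notMem]
  refine ⟨fun h => (eq_bot_or_exists_atom_le c).resolve_right fun ⟨a, ha, hac⟩ => h a ⟨ha, hac⟩, ?_⟩
  rintro rfl a ⟨ha, hle⟩
  exact ha.1 (le_bot_iff.1 hle)

lemma atomCount_inf_add_inf_compl (c u : α) :
    atomCount (c ⊓ u) + atomCount (c ⊓ uᶜ) = atomCount c := by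
  rw [atomCount, atomCount, atomCount, ← Set.encard_union_eq]
  · congr 1
    ext a
    simp only [atomsBelow, Set.mem_union, Set.mem_ofPred_eq, le_inf_iff]
    by_cases ha : IsAtom a
    · simp only [ha, ha.le_compl_iff, true_and, ← and_or_left, em, and_true]
    · simp [ha]
  · rw [Set.disjoint_left]
    rintro a ⟨ha, hau⟩ ⟨-, hau'⟩
    exact ha.le_compl_iff.1 (le_inf_iff.1 hau').2 (le_inf_iff.1 hau).2

lemma exists_le_atomCount_eq {k : ℕ} (h : k ≤ atomCount c) : ∃ u ≤ c, atomCount u = k := by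
  obtain ⟨t, hts, htk⟩ := Set.exists_subset_encard_eq h
  have ht := Set.finite_of_encard_eq_coe htk
  refine ⟨ht.toFinset.sup id, Finset.sup_le fun a ha => (hts (ht.mem_toFinset.1 ha)).2, ?_⟩
  rw [atomCount, atomsBelow_finset_sup (f := id) fun a ha => (hts (ht.mem_toFinset.1 ha)).1]
  simpa using htk

lemma exists_le_atomCount_eq_and_compl {d : α} {k r : ℕ∞} (h : k + r = atomCount d)
    (hkr : k ≠ ⊤ ∨ r ≠ ⊤) : ∃ u ≤ d, atomCount u = k ∧ atomCount (d ⊓ uᶜ) = r := by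
  rcases hkr with hk | hr
  · lift k to ℕ using hk
    obtain ⟨u, hud, hu⟩ := exists_le_atomCount_eq (h ▸ le_self_add : (k : ℕ∞) ≤ atomCount d)
    refine ⟨u, hud, hu, (ENat.addLECancellable_of_ne_top (ENat.natCast_ne_top k)).inj.1 ?_⟩
    rw [h, ← hu, ← atomCount_inf_add_inf_compl d u, inf_eq_right.2 hud]
  · lift r to ℕ using hr
    obtain ⟨v, hvd, hv⟩ := exists_le_atomCount_eq (h ▸ le_add_self : (r : ℕ∞) ≤ atomCount d)
    have hcompl : d ⊓ (d ⊓ vᶜ)ᶜ = v := by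
      rw [compl_inf, _root_.compl_compl, inf_sup_left, inf_compl_self, bot_sup_eq,
        inf_eq_right.2 hvd]
    refine ⟨d ⊓ vᶜ, inf_le_left, (ENat.addLECancellable_of_ne_top (ENat.natCast_ne_top r)).inj.1 ?_,
      by rw [hcompl, hv]⟩
    rw [add_comm _ k, h, ← hv, ← atomCount_inf_add_inf_compl d v, inf_eq_right.2 hvd, add_comm]

lemma Set.Finite.finset_sup_atomsBelow [IsAtomic α] (hc : (atomsBelow c).Finite) :
    hc.toFinset.sup id = c := by
  have h := atomsBelow_finset_sup (f := id) fun b hb => (hc.mem_toFinset.1 hb).1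
  rw [Set.image_id, hc.coe_toFinset] at h
  exact BooleanAlgebra.eq_iff_atom_le_iff.2 fun a ha => by
    simpa [atomsBelow, ha] using congrArg (a ∈ ·) h

lemma atomCount_map [IsAtomic α] (f : BoundedLatticeHom α β) (hf : Function.Injective f)
    (hatom : ∀ a, IsAtom a → IsAtom (f a)) (c : α) : atomCount (f c) = atomCount c := by
  have hcard : (f '' atomsBelow c).encard = atomCount c := hf.injOn.encard_image
  by_cases hc : (atomsBelow c).Finite
  · have hfc : f c = hc.toFinset.sup f := by
      conv_lhs => rw [← hc.finset_sup_atomsBelow]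
      rw [map_finset_sup, Function.comp_id]
    rw [atomCount, hfc, atomsBelow_finset_sup fun b hb => hatom b (hc.mem_toFinset.1 hb).1,
      hc.coe_toFinset, hcard]
  · have hsub : f '' atomsBelow c ⊆ atomsBelow (f c) := by
      rintro _ ⟨a, ⟨ha, hac⟩, rfl⟩
      exact ⟨hatom a ha, OrderHomClass.mono f hac⟩
    have htop : atomCount c = ⊤ := Set.Infinite.encard_eq hc
    rw [htop, ← top_le_iff, ← htop, ← hcard]
    exact Set.encard_le_encard hsub

end AtomCount

section Cells

variable {α β : Type*} [BooleanAlgebra α] [BooleanAlgebra β] {k : ℕ}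

def cell (x : Fin k → α) (ε : Fin k → Bool) : α :=
  Finset.univ.inf fun i => bif ε i then x i else (x i)ᶜ

open Classical in
noncomputable def signature (x : Fin k → α) (a : α) : Fin k → Bool :=
  fun i => decide (a ≤ x i)

lemma signature_eq_true {x : Fin k → α} {a : α} {i : Fin k} :
    signature x a i = true ↔ a ≤ x i := by
  classical
  exact decide_eq_true_iff

lemma IsAtom.le_cell_iff {a : α} (ha : IsAtom a) {x : Fin k → α} {ε : Fin k → Bool} :
    a ≤ cell x ε ↔ signature x a = ε := by
  simp only [cell, Finset.le_inf_iff, Finset.mem_univ, true_implies, funext_iff]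
  refine forall_congr' fun i => ?_
  cases ε i <;> simp [ha.le_compl_iff, ← signature_eq_true]

lemma cell_disjoint (x : Fin k → α) {ε ε' : Fin k → Bool} (h : ε ≠ ε') :
    Disjoint (cell x ε) (cell x ε') := by
  obtain ⟨i, hi⟩ := Function.ne_iff.1 h
  have hle (ε : Fin k → Bool) : cell x ε ≤ bif ε i then x i else (x i)ᶜ :=
    Finset.inf_le (Finset.mem_univ i)
  refine Disjoint.mono (hle ε) (hle ε') ?_
  cases hε : ε i <;> cases hε' : ε' i <;> simp_all [disjoint_compl_left, disjoint_compl_right]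

lemma cell_snoc (x : Fin k → α) (c : α) (ε : Fin (k + 1) → Bool) :
    cell (Fin.snoc x c) ε = cell x (ε ∘ Fin.castSucc) ⊓ bif ε (Fin.last k) then c else cᶜ := by
  rw [cell, Fin.univ_castSuccEmb, Finset.inf_cons, Finset.inf_map, inf_comm]
  simp [cell, Function.comp_def]

lemma map_cell (f : BoundedLatticeHom α β) (x : Fin k → α) (ε : Fin k → Bool) :
    f (cell x ε) = cell (f ∘ x) ε := by
  rw [cell, map_finset_inf]
  refine Finset.inf_congr rfl fun i _ => ?_
  simp only [Function.comp_apply]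
  cases ε i <;> simp

end Cells

section AtomCountEquiv

variable {α β : Type*} [BooleanAlgebra α] [BooleanAlgebra β] {k N : ℕ}

lemma exists_le_min_atomCount_eq {c : α} {d : β}
    (h : min (2 * N + 2 : ℕ∞) (atomCount c) = min (2 * N + 2 : ℕ∞) (atomCount d)) (e : α) :
    ∃ u ≤ d, min (N : ℕ∞) (atomCount (c ⊓ e)) = min (N : ℕ∞) (atomCount u) ∧
      min (N : ℕ∞) (atomCount (c ⊓ eᶜ)) = min (N : ℕ∞) (atomCount (d ⊓ uᶜ)) := by
  rw [← atomCount_inf_add_inf_compl c e] at h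
  obtain ⟨k, r, hkr, hfin, hk, hr⟩ := ENat.exists_add_eq_min_eq N h
  obtain ⟨u, hud, rfl, rfl⟩ := exists_le_atomCount_eq_and_compl hkr hfin
  exact ⟨u, hud, hk.symm, hr.symm⟩

def AtomCountEquiv (N : ℕ) (x : Fin k → α) (y : Fin k → β) : Prop :=
  ∀ ε, min (N : ℕ∞) (atomCount (cell x ε)) = min (N : ℕ∞) (atomCount (cell y ε))

lemma AtomCountEquiv.symm {x : Fin k → α} {y : Fin k → β} (h : AtomCountEquiv N x y) :
    AtomCountEquiv N y x :=
  fun ε => (h ε).symm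

lemma AtomCountEquiv.mono {M : ℕ} {x : Fin k → α} {y : Fin k → β} (h : AtomCountEquiv N x y)
    (hMN : M ≤ N) : AtomCountEquiv M x y := by
  intro ε
  have hM : (M : ℕ∞) = min (M : ℕ∞) N := (min_eq_left (mod_cast hMN)).symm
  rw [hM, min_assoc, min_assoc, h ε]

lemma AtomCountEquiv.cell_ne_bot_iff [IsAtomic α] [IsAtomic β] {x : Fin k → α}
    {y : Fin k → β} (h : AtomCountEquiv 1 x y) (ε : Fin k → Bool) :
    cell x ε ≠ ⊥ ↔ cell y ε ≠ ⊥ := by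
  have key (c : ℕ∞) : min ((1 : ℕ) : ℕ∞) c = 0 ↔ c = 0 := by simp
  rw [Ne, Ne, ← atomCount_eq_zero, ← atomCount_eq_zero, ← key, h ε, key]

lemma inf_finset_sup_of_le_cell (y : Fin k → β) {u : (Fin k → Bool) → β}
    (hu : ∀ ε, u ε ≤ cell y ε) (ε : Fin k → Bool) : cell y ε ⊓ Finset.univ.sup u = u ε := by
  refine le_antisymm ?_ (le_inf (hu ε) (Finset.le_sup (Finset.mem_univ ε)))
  rw [Finset.sup_inf_distrib_left]
  refine Finset.sup_le fun ε' _ => ?_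
  rcases eq_or_ne ε' ε with rfl | hne
  · exact inf_le_right
  · exact ((cell_disjoint y hne.symm).mono_right (hu ε')).le_bot.trans bot_le

lemma AtomCountEquiv.exists_snoc {x : Fin k → α} {y : Fin k → β}
    (h : AtomCountEquiv (2 * N + 2) x y) (c : α) :
    ∃ d, AtomCountEquiv N (Fin.snoc x c) (Fin.snoc y d) := by
  choose u hu hc hcompl using fun ε => exists_le_min_atomCount_eq (mod_cast h ε) c
  refine ⟨Finset.univ.sup u, fun ε => ?_⟩
  have hd := inf_finset_sup_of_le_cell y hu (ε ∘ Fin.castSucc)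
  rw [cell_snoc, cell_snoc]
  cases ε (Fin.last k)
  · have hdc : cell y (ε ∘ Fin.castSucc) ⊓ (Finset.univ.sup u)ᶜ =
        cell y (ε ∘ Fin.castSucc) ⊓ (u (ε ∘ Fin.castSucc))ᶜ := by
      rw [← hd, compl_inf, inf_sup_left, inf_compl_self, bot_sup_eq]
    rw [cond_false, cond_false, hdc]
    exact hcompl _
  · rw [cond_true, cond_true, hd]
    exact hc _

lemma atomCountEquiv_comp [IsAtomic α] (f : BoundedLatticeHom α β) (hf : Function.Injective f)
    (hatom : ∀ a, IsAtom a → IsAtom (f a)) (N : ℕ) {k : ℕ} (x : Fin k → α) :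
    AtomCountEquiv N (f ∘ x) x := fun ε => by rw [← map_cell, atomCount_map f hf hatom]

end AtomCountEquiv

namespace TeamSem

section BoolLang

variable {α β : Type*} [BooleanAlgebra α] [BooleanAlgebra β]

lemma _root_.IsAtom.le_realize_iff {a : α} (ha : IsAtom a) {k : ℕ} (x : Fin k → α)
    (t : boolLang.Term (Fin k)) : a ≤ t.realize x ↔ t.realize (signature x a) = true := by
  induction t with
  | var i => exact signature_eq_true.symm
  | @func l f ts ih =>
    match l, f with
    | 0, false => exact iff_of_false (fun h => ha.1 (le_bot_iff.1 h)) Bool.false_ne_true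
    | 0, true => exact iff_of_true le_top rfl
    | 1, _ =>
      show a ≤ (Term.realize x (ts 0))ᶜ ↔ (!Term.realize (signature x a) (ts 0)) = true
      rw [ha.le_compl_iff, ih 0, Bool.not_eq_true', Bool.not_eq_true]
    | 2, false =>
      show a ≤ Term.realize x (ts 0) ⊓ Term.realize x (ts 1) ↔
        (Term.realize (signature x a) (ts 0) && Term.realize (signature x a) (ts 1)) = true
      rw [le_inf_iff, ih 0, ih 1, Bool.and_eq_true]
    | 2, true =>
      show a ≤ Term.realize x (ts 0) ⊔ Term.realize x (ts 1) ↔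
        (Term.realize (signature x a) (ts 0) || Term.realize (signature x a) (ts 1)) = true
      rw [ha.supPrime.le_sup, ih 0, ih 1, Bool.or_eq_true]
    | _ + 3, f => exact f.elim

lemma realize_eq_iff_forall_cell_ne_bot [IsAtomic α] {k : ℕ} (t₁ t₂ : boolLang.Term (Fin k))
    (x : Fin k → α) :
    t₁.realize x = t₂.realize x ↔ ∀ ε, cell x ε ≠ ⊥ → t₁.realize ε = t₂.realize ε := by
  rw [BooleanAlgebra.eq_iff_atom_le_iff]
  constructor
  · intro h ε hε
    obtain ⟨a, ha, hle⟩ := (eq_bot_or_exists_atom_le _).resolve_left hε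
    rw [ha.le_cell_iff] at hle
    subst hle
    rw [Bool.eq_iff_iff, ← ha.le_realize_iff, ← ha.le_realize_iff]
    exact h a ha
  · intro h a ha
    rw [ha.le_realize_iff, ha.le_realize_iff, h _ (ne_bot_of_le_ne_bot ha.1 (ha.le_cell_iff.2 rfl))]

lemma sumElim_default_eq_comp {M : Type*} {n : ℕ} (x : Fin n → M) :
    Sum.elim (default : Empty → M) x = x ∘ Sum.elim Empty.elim id :=
  funext (Sum.rec (fun e => e.elim) fun _ => rfl)

theorem exists_atomCountEquiv_realize_iff [IsAtomic α] [IsAtomic β] {n : ℕ}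
    (φ : boolLang.BoundedFormula Empty n) :
    ∃ N, ∀ (x : Fin n → α) (y : Fin n → β),
      AtomCountEquiv N x y → (φ.Realize default x ↔ φ.Realize default y) := by
  induction φ with
  | falsum => exact ⟨0, fun _ _ _ => Iff.rfl⟩
  | equal t₁ t₂ =>
    refine ⟨1, fun x y hxy => ?_⟩
    simp only [BoundedFormula.Realize, sumElim_default_eq_comp, ← Term.realize_relabel]
    rw [realize_eq_iff_forall_cell_ne_bot, realize_eq_iff_forall_cell_ne_bot]
    exact forall_congr' fun ε => imp_congr_left (hxy.cell_ne_bot_iff ε)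
  | rel R => exact R.elim
  | imp φ ψ ihφ ihψ =>
    obtain ⟨N₁, h₁⟩ := ihφ
    obtain ⟨N₂, h₂⟩ := ihψ
    refine ⟨max N₁ N₂, fun x y hxy => ?_⟩
    simp only [BoundedFormula.realize_imp, h₁ x y (hxy.mono (le_max_left _ _)),
      h₂ x y (hxy.mono (le_max_right _ _))]
  | all φ ih =>
    obtain ⟨N, hN⟩ := ih
    refine ⟨2 * N + 2, fun x y hxy => ?_⟩
    simp only [BoundedFormula.realize_all]
    constructor
    · intro hx d
      obtain ⟨c, hc⟩ := hxy.symm.exists_snoc d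
      exact (hN _ _ hc.symm).1 (hx c)
    · intro hy c
      obtain ⟨d, hd⟩ := hxy.exists_snoc c
      exact (hN _ _ hd).2 (hy d)

theorem exists_atomCountEquiv_formula_realize_iff [IsAtomic α] [IsAtomic β] {n : ℕ}
    (φ : boolLang.Formula (Fin n)) :
    ∃ N, ∀ (x : Fin n → α) (y : Fin n → β), AtomCountEquiv N x y → (φ.Realize x ↔ φ.Realize y) := by
  obtain ⟨N, hN⟩ :=
    exists_atomCountEquiv_realize_iff (α := α) (β := β) (BoundedFormula.relabel Sum.inr φ)
  refine ⟨N, fun x y hxy => ?_⟩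
  rw [← Formula.realize_relabel_sumInr, ← Formula.realize_relabel_sumInr]
  exact hN x y hxy

theorem realize_comp_iff_of_isAtom_map [IsAtomic α] [IsAtomic β] (f : BoundedLatticeHom α β)
    (hf : Function.Injective f) (hatom : ∀ a, IsAtom a → IsAtom (f a)) {n : ℕ}
    (φ : boolLang.Formula (Fin n)) (x : Fin n → α) : φ.Realize (f ∘ x) ↔ φ.Realize x := by
  obtain ⟨N, hN⟩ := exists_atomCountEquiv_formula_realize_iff (α := β) (β := α) φ
  exact hN _ _ (atomCountEquiv_comp f hf hatom N x)

@[simp] lemma funMap_bot (v : Fin 0 → α) :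
    Structure.funMap (L := boolLang) (show boolLang.Functions 0 from false) v = ⊥ := rfl

@[simp] lemma funMap_inf (v : Fin 2 → α) :
    Structure.funMap (L := boolLang) (show boolLang.Functions 2 from false) v = v 0 ⊓ v 1 := rfl

/-- `x ≠ ⊥ ∧ ∀ y ≠ ⊥, y ⊓ x = y → x ⊓ y = x`, following `isAtom_iff_le_of_ge`. -/
def isAtomFormula : boolLang.Formula (Fin 1) :=
  let x {n} : boolLang.Term (Fin 1 ⊕ Fin n) := var (Sum.inl 0)
  let bot {n} : boolLang.Term (Fin 1 ⊕ Fin n) := Constants.term (show boolLang.Constants from false)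
  let inf := Functions.apply₂ (show boolLang.Functions 2 from false)
  ∼(x =' bot) ⊓ ∀' (∼(&0 =' bot) ⟹ (inf &0 x =' &0) ⟹ (inf x &0 =' x))

lemma realize_isAtomFormula (v : Fin 1 → α) :
    isAtomFormula.Realize v ↔ IsAtom (v 0) := by
  rw [isAtom_iff_le_of_ge]
  have hsnoc (a : α) : (Fin.snoc (default : Fin 0 → α) a : Fin 1 → α) 0 = a := rfl
  simp [isAtomFormula, Formula.Realize, Constants.term, Functions.apply₂, Term.realize, hsnoc]

end BoolLang

theorem infinite_atomic_boolean_algebra_elementary_iff_general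
    {C : Type u} {D : Type v} [BooleanAlgebra C] [BooleanAlgebra D]
    [IsAtomic C] [IsAtomic D] (g : C → D) :
    (∃ e : C ↪ₑ[boolLang] D, ⇑e = g) ↔
      (Function.Injective g ∧
        (∀ x y, g (x ⊔ y) = g x ⊔ g y) ∧
        (∀ x y, g (x ⊓ y) = g x ⊓ g y) ∧
        (∀ x, g xᶜ = (g x)ᶜ) ∧
        g ⊥ = ⊥ ∧ g ⊤ = ⊤ ∧
        ∀ a : C, IsAtom a → IsAtom (g a)) := by
  constructor
  · rintro ⟨e, rfl⟩
    refine ⟨e.injective, fun x y => e.map_fun (show boolLang.Functions 2 from true) ![x, y],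
      fun x y => e.map_fun (show boolLang.Functions 2 from false) ![x, y],
      fun x => e.map_fun (show boolLang.Functions 1 from ()) ![x],
      e.map_fun (show boolLang.Functions 0 from false) ![],
      e.map_fun (show boolLang.Functions 0 from true) ![], fun a ha => ?_⟩
    have h := (e.map_formula isAtomFormula ![a]).2 ((realize_isAtomFormula _).2 ha)
    exact (realize_isAtomFormula _).1 h
  · rintro ⟨hinj, hsup, hinf, -, hbot, htop, hatom⟩
    let f : BoundedLatticeHom C D :=
      { toFun := g, map_sup' := hsup, map_inf' := hinf, map_top' := htop, map_bot' := hbot }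
    exact ⟨⟨g, fun _ => realize_comp_iff_of_isAtom_map f hinj hatom⟩, rfl⟩

/-- **Elementary embeddings of infinite atomic Boolean algebras.**
A map `g : C → D` between infinite atomic Boolean algebras is an elementary embedding
(w.r.t. the first-order language of Boolean algebras) if and only if it is an embedding
(injective and preserving `∨`, `∧`, `¬`, `⊥`, `⊤`) that maps atoms to atoms. -/
theorem infinite_atomic_boolean_algebra_elementary_iff
    {C : Type u} {D : Type v} [BooleanAlgebra C] [BooleanAlgebra D]
    [Infinite C] [Infinite D] [IsAtomic C] [IsAtomic D] (g : C → D) :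
    (∃ e : C ↪ₑ[boolLang] D, ⇑e = g) ↔
      (Function.Injective g ∧
        (∀ x y, g (x ⊔ y) = g x ⊔ g y) ∧
        (∀ x y, g (x ⊓ y) = g x ⊓ g y) ∧
        (∀ x, g xᶜ = (g x)ᶜ) ∧
        g ⊥ = ⊥ ∧ g ⊤ = ⊤ ∧
        ∀ a : C, IsAtom a → IsAtom (g a)) :=
  infinite_atomic_boolean_algebra_elementary_iff_general g

end TeamSem
end

section
/- Let f: 𝔄 → 𝔅 be an elementary team embedding between τ-structures, let R be a fresh n-ary relation symbol, let ψ be an existential second-order (ESO) sentence over the signature τ ∪ {R}, and let X ⊆ A^n. If the expansion (𝔄, X) of 𝔄 interpreting R as X satisfies ψ, then the expansion (𝔅, f(X)) of 𝔅 interpreting R as f(X) satisfies ψ. (In other words, elementary team embeddings preserve all existential second-order definable properties of relations in the forward direction.) -/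
open FirstOrder Language Set

universe u v w x

/-!
Given `(𝔄, X, S) ⊨ φ`, the witnesses for `(𝔅, f(X))` are the images `f(S)`. Elementarity of `f`
transfers `φ` from `(𝔄, X, S)` to `(𝔅, f(X), f(S))`, except that it only speaks about nonempty
relations. So the empty relations among `X, S` are removed from the language: their atoms are
replaced by `⊥`, which is harmless on both sides because `f(∅) = ∅`, and the remaining relation
symbols are renumbered into a single fresh language.
-/

universe u₂ v₂

namespace TeamSem

section MapSymbols

open Structure

variable {L₁ : FirstOrder.Language.{u, v}} {L₂ : FirstOrder.Language.{u₂, v₂}}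
  (F : ∀ ⦃n⦄, L₁.Functions n → L₂.Functions n)
  (ρ : ∀ ⦃n⦄, L₁.Relations n → Option (L₂.Relations n))

def mapTerm {α : Type*} : L₁.Term α → L₂.Term α
  | .var a => .var a
  | .func f ts => .func (F f) fun i => mapTerm (ts i)

def mapFormula {α : Type*} : ∀ {n}, L₁.BoundedFormula α n → L₂.BoundedFormula α n
  | _, .falsum => .falsum
  | _, .equal t₁ t₂ => .equal (mapTerm F t₁) (mapTerm F t₂)
  | _, .rel R ts => (ρ R).elim .falsum fun R' => .rel R' fun i => mapTerm F (ts i)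
  | _, .imp φ ψ => .imp (mapFormula φ) (mapFormula ψ)
  | _, .all φ => .all (mapFormula φ)

variable {M : Type*} [L₁.Structure M] [L₂.Structure M] {F ρ}

theorem realize_mapTerm
    (hF : ∀ {n} (f : L₁.Functions n) (xs : Fin n → M), funMap (F f) xs = funMap f xs)
    {α : Type*} (t : L₁.Term α) (v : α → M) :
    (mapTerm F t).realize v = t.realize v := by
  induction t with
  | var => rfl
  | func f ts ih => simp only [mapTerm, Term.realize_func, ih, hF]

theorem realize_mapFormula
    (hF : ∀ {n} (f : L₁.Functions n) (xs : Fin n → M), funMap (F f) xs = funMap f xs)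
    (hρ : ∀ {n} (R : L₁.Relations n) (xs : Fin n → M),
      RelMap R xs ↔ (ρ R).elim False fun R' => RelMap R' xs)
    {α : Type*} {n : ℕ} (φ : L₁.BoundedFormula α n) (v : α → M) (xs : Fin n → M) :
    (mapFormula F ρ φ).Realize v xs ↔ φ.Realize v xs := by
  induction φ with
  | falsum => rfl
  | equal t₁ t₂ => simp only [mapFormula, BoundedFormula.Realize, realize_mapTerm hF]
  | rel R ts =>
    change _ ↔ RelMap R _
    rw [hρ]
    cases hR : ρ R <;> simp [mapFormula, hR, BoundedFormula.Realize, realize_mapTerm hF]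
  | imp φ ψ ihφ ihψ => exact imp_congr (ihφ xs) (ihψ xs)
  | all φ ih => exact forall_congr' fun a => ih _

end MapSymbols

section Flatten

open Structure

variable {L : FirstOrder.Language.{u, v}} {k₁ k₂ K : ℕ} {a₁ : Fin k₁ → ℕ} {a₂ : Fin k₂ → ℕ}
  {p : Fin k₁ ⊕ Fin k₂ → Prop} [DecidablePred p] (e : {i // p i} ≃ Fin K)

def keepRel {m : ℕ} (i : Fin k₁ ⊕ Fin k₂) (h : Sum.elim a₁ a₂ i = m) :
    Option ((relLang K fun j => Sum.elim a₁ a₂ (e.symm j)).Relations m) :=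
  if hi : p i then some ⟨e ⟨i, hi⟩, by simpa using h⟩ else none

def flatFun {a : Fin K → ℕ} :
    ∀ ⦃m⦄, ((L.sum (relLang k₁ a₁)).sum (relLang k₂ a₂)).Functions m →
      (L.sum (relLang K a)).Functions m
  | _, .inl (.inl f) => .inl f
  | _, .inl (.inr f) => f.elim
  | _, .inr f => f.elim

def flatRel :
    ∀ ⦃m⦄, ((L.sum (relLang k₁ a₁)).sum (relLang k₂ a₂)).Relations m →
      Option ((L.sum (relLang K fun j => Sum.elim a₁ a₂ (e.symm j))).Relations m)
  | _, .inl (.inl R) => some (.inl R)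
  | _, .inl (.inr ⟨i, h⟩) => (keepRel e (.inl i) h).map .inr
  | _, .inr ⟨i, h⟩ => (keepRel e (.inr i) h).map .inr

variable {M : Type*} (U : ∀ i, Set (Fin (Sum.elim a₁ a₂ i) → M))

theorem mem_iff_keepRel (hU : ∀ i, ¬ p i → U i = ∅) {m : ℕ} (i : Fin k₁ ⊕ Fin k₂)
    (h : Sum.elim a₁ a₂ i = m) (v : Fin m → M) :
    (fun l => v (Fin.cast h l)) ∈ U i ↔ (keepRel e i h).elim False fun R' =>
      (letI := relStructure fun j => U (e.symm j); RelMap R' v) := by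
  by_cases hi : p i
  · rw [keepRel, dif_pos hi]
    have mem_congr : ∀ (j : {i // p i}), j = ⟨i, hi⟩ → ∀ h' : Sum.elim a₁ a₂ j.1 = m,
        ((fun l => v (Fin.cast h l)) ∈ U i ↔ (fun l => v (Fin.cast h' l)) ∈ U j.1) := by
      rintro _ rfl _
      rfl
    exact mem_congr _ (e.symm_apply_apply _) _
  · rw [keepRel, dif_neg hi, hU i hi]
    exact Set.mem_empty_iff_false _

theorem realizeWith_mapFormula_flatRel [L.Structure M] (hU : ∀ i, ¬ p i → U i = ∅)
    (φ : ((L.sum (relLang k₁ a₁)).sum (relLang k₂ a₂)).Sentence) :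
    RealizeWith M (mapFormula flatFun (flatRel e) φ) (fun j => U (e.symm j)) ↔
      (letI := relStructure (ar := a₁) fun i => U (.inl i)
       letI := relStructure (ar := a₂) fun i => U (.inr i)
       M ⊨ φ) := by
  let := relStructure fun j => U (e.symm j)
  let := relStructure (ar := a₁) fun i => U (.inl i)
  let := relStructure (ar := a₂) fun i => U (.inr i)
  refine realize_mapFormula ?_ ?_ φ default default
  · rintro m ((f | f) | f) xs
    exacts [rfl, f.elim, f.elim]
  · rintro m ((R | ⟨i, h⟩) | ⟨i, h⟩) xs
    · exact Iff.rfl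
    · refine (mem_iff_keepRel e U hU (.inl i) h xs).trans ?_
      rw [flatRel]
      cases keepRel e (.inl i) h <;> exact Iff.rfl
    · refine (mem_iff_keepRel e U hU (.inr i) h xs).trans ?_
      rw [flatRel]
      cases keepRel e (.inr i) h <;> exact Iff.rfl

end Flatten

theorem PartialTeamMap.IsElementary.realize_map_of_total {L : FirstOrder.Language.{u, v}}
    {A : Type w} {B : Type x} [L.Structure A] [L.Structure B] {f : PartialTeamMap L A B}
    (hEl : f.IsElementary) (hTot : f.Total) {k₁ k₂ : ℕ} {a₁ : Fin k₁ → ℕ} {a₂ : Fin k₂ → ℕ}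
    (T₁ : ∀ i, Set (Fin (a₁ i) → A)) (T₂ : ∀ i, Set (Fin (a₂ i) → A))
    (φ : ((L.sum (relLang k₁ a₁)).sum (relLang k₂ a₂)).Sentence)
    (h : letI := relStructure T₁; letI := relStructure T₂; A ⊨ φ) :
    letI := relStructure fun i => f.toFun (a₁ i) (T₁ i)
    letI := relStructure fun i => f.toFun (a₂ i) (T₂ i)
    B ⊨ φ := by
  classical
  let T : ∀ i, Set (Fin (Sum.elim a₁ a₂ i) → A) := Sum.rec T₁ T₂
  let e := Fintype.equivFin {i // (T i).Nonempty}
  have hA := realizeWith_mapFormula_flatRel e T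
    (fun _ hi => Set.not_nonempty_iff_eq_empty.mp hi) φ
  have hB := realizeWith_mapFormula_flatRel e (fun i => f.toFun _ (T i))
    (fun _ hi => by rw [Set.not_nonempty_iff_eq_empty.mp hi, f.map_empty]) φ
  have hφ := hEl _ _ (mapFormula flatFun (flatRel e) φ) (fun j => T (e.symm j))
    (fun _ => by rw [hTot]; trivial) (fun j => (e.symm j).2)
  exact hB.mp (hφ.mp (hA.mpr h))

/-- **Elementary team embeddings preserve existential second-order properties of
relations** (in the forward direction): if `(𝔄, X) ⊨ ψ` for an ESO sentence `ψ` over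
`τ ∪ {R}`, then `(𝔅, f(X)) ⊨ ψ`. -/
theorem elemTeamEmbedding_preserves_eso
    {L : FirstOrder.Language.{u, v}} {A : Type w} {B : Type x}
    [L.Structure A] [L.Structure B]
    (f : PartialTeamMap L A B) (hTot : f.Total) (hEl : f.IsElementary)
    (n : ℕ) (ψ : ESOSentence (L.sum (relLang 1 fun _ => n))) (X : Set (Fin n → A))
    (hA : letI := relStructure (M := A) (fun _ : Fin 1 => X); ψ.Realize A) :
    letI := relStructure (M := B) (fun _ : Fin 1 => f.toFun n X); ψ.Realize B := by
  obtain ⟨S, hS⟩ := hA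
  exact ⟨fun i => f.toFun (ψ.ar i) (S i), hEl.realize_map_of_total hTot _ S ψ.toSentence hS⟩

end TeamSem
end

section
/- Suppose f: 𝔄 → 𝔅 is a partial team isomorphism between τ-structures that is element-total ({a} ∈ dom(f) for every a ∈ A) and element-surjective ({b} ∈ ran(f) for every b ∈ B). Then there is an isomorphism π: 𝔄 → 𝔅 of τ-structures such that f(X) = {π(a⃗) : a⃗ ∈ X} for every X ∈ dom(f). Consequently, a total team map f is a team isomorphism (a total, element-surjective partial team isomorphism) if and only if f = π̂ for some isomorphism π: 𝔄 → 𝔅, where π̂(X) = {π(a⃗) : a⃗ ∈ X} for all X ∈ R(𝔄). -/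
open FirstOrder Language Set

universe u v w x

namespace TeamSem


private lemma teamProd_singleton {A : Type w} {n : ℕ} (s : Fin (n + 1) → A) :
    teamProd ({fun i => s i.castSucc} : Set (Fin n → A))
      ({fun _ => s (Fin.last n)} : Set (Fin 1 → A)) = {s} := by
  have hna : Fin.natAdd n (0 : Fin 1) = Fin.last n := by ext; simp
  ext t
  simp only [teamProd, Set.mem_setOf_eq, Set.mem_singleton_iff]
  constructor
  · rintro ⟨h1, h2⟩
    funext i
    refine Fin.lastCases ?_ (fun j => ?_) i
    · have := congrFun h2 0
      rw [hna] at this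
      exact this
    · exact congrFun h1 j
  · rintro rfl
    refine ⟨rfl, funext fun j => ?_⟩
    have : j = 0 := Subsingleton.elim _ _
    rw [this, hna]

private lemma mainIso {L : FirstOrder.Language.{u, v}} {A : Type w} {B : Type x}
    [L.Structure A] [L.Structure B] (f : PartialTeamMap L A B) (hIso : f.IsIso)
    (hTot : f.ElementTotal) (hSurj : f.ElementSurjective) :
    ∃ π : A ≃[L] B, ∀ (n : ℕ) (X : Set (Fin n → A)), X ∈ f.dom n →
      f.toFun n X = (fun s => ⇑π ∘ s) '' X := by
  -- choose the value of π at each element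
  have hsing : ∀ a : A, ∃ b : B, f.toFun 1 {fun _ => a} = {fun _ => b} := by
    intro a
    obtain ⟨t, ht⟩ := (hIso.singleton_iff 1 _ (hTot a)).mp ⟨_, rfl⟩
    refine ⟨t 0, ht.trans ?_⟩
    congr 1
    funext i
    have : i = 0 := Subsingleton.elim _ _
    rw [this]
  choose π0 hπ0 using hsing
  -- singletons are in the domain and map to singletons of images
  have hsingleton : ∀ (n : ℕ) (s : Fin n → A),
      ({s} : Set (Fin n → A)) ∈ f.dom n ∧ f.toFun n {s} = {π0 ∘ s} := by
    intro n
    induction n with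
    | zero =>
      intro s
      have hA : ({s} : Set (Fin 0 → A)) = Set.univ :=
        Set.eq_univ_iff_forall.mpr fun t => Subsingleton.elim t s
      have hB : ({π0 ∘ s} : Set (Fin 0 → B)) = Set.univ :=
        Set.eq_univ_iff_forall.mpr fun t => Subsingleton.elim t (π0 ∘ s)
      rw [hA, hB]
      exact ⟨f.dom_closed.univ_mem 0,
        (hIso.univ_iff 0 Set.univ (f.dom_closed.univ_mem 0)).mp rfl⟩
    | succ n ih =>
      intro s
      obtain ⟨hd, hf⟩ := ih fun i => s i.castSucc
      have hd1 := hTot (s (Fin.last n))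
      have hprod := f.dom_closed.prod_mem n 1 _ _ hd hd1
      rw [teamProd_singleton s] at hprod
      refine ⟨hprod, ?_⟩
      have := hIso.map_prod n 1 _ _ hd hd1
      rw [teamProd_singleton s, hf, hπ0 (s (Fin.last n))] at this
      rw [this]
      exact teamProd_singleton (π0 ∘ s)
  -- injectivity and surjectivity of π0
  have hinj : Function.Injective π0 := by
    intro a a' h
    have hda := hTot a
    have hda' := hTot a'
    have : f.toFun 1 {fun _ => a} ⊆ f.toFun 1 {fun _ => a'} := by
      rw [hπ0 a, hπ0 a', h]
    have hsub := (hIso.subset_iff 1 _ _ hda hda').mpr this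
    have := hsub rfl
    exact congrFun (Set.mem_singleton_iff.mp this) 0
  have hsurj : Function.Surjective π0 := by
    intro b
    obtain ⟨X, hX, hfX⟩ := hSurj b
    obtain ⟨s, rfl⟩ := (hIso.singleton_iff 1 X hX).mpr ⟨_, hfX⟩
    obtain ⟨_, hfs⟩ := hsingleton 1 s
    rw [hfs] at hfX
    exact ⟨s 0, congrFun (Set.singleton_eq_singleton_iff.mp hfX) 0⟩
  choose σ hσ using hsurj
  -- the main image formula
  have key : ∀ (n : ℕ) (X : Set (Fin n → A)), X ∈ f.dom n →
      f.toFun n X = (fun s => π0 ∘ s) '' X := by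
    intro n X hX
    ext t
    constructor
    · intro ht
      refine ⟨fun i => σ (t i), ?_, funext fun i => hσ (t i)⟩
      have hst : π0 ∘ (fun i => σ (t i)) = t := funext fun i => hσ (t i)
      have h1 : f.toFun n {fun i => σ (t i)} ⊆ f.toFun n X := by
        rw [(hsingleton n _).2, hst]
        exact Set.singleton_subset_iff.mpr ht
      have := (hIso.subset_iff n _ X (hsingleton n _).1 hX).mpr h1
      exact this rfl
    · rintro ⟨s, hs, rfl⟩
      have h1 : ({s} : Set (Fin n → A)) ⊆ X := Set.singleton_subset_iff.mpr hs
      have := (hIso.subset_iff n _ X (hsingleton n s).1 hX).mp h1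
      rw [(hsingleton n s).2] at this
      exact this rfl
  -- π0 preserves relations
  have hrel : ∀ {n : ℕ} (R : L.Relations n) (x : Fin n → A),
      Structure.RelMap R (π0 ∘ x) ↔ Structure.RelMap R x := by
    intro n R x
    have hmem := f.dom_closed.rel_mem n R
    have h := (key n _ hmem).symm.trans (hIso.map_rel n R)
    constructor
    · intro h1
      have : (π0 ∘ x) ∈ relSet L B R := h1
      rw [← h] at this
      obtain ⟨s, hs, hsx⟩ := this
      have : s = x := funext fun i => hinj (congrFun hsx i)
      rwa [← this]
    · intro h1
      have : (π0 ∘ x) ∈ (fun s => π0 ∘ s) '' relSet L A R := ⟨x, h1, rfl⟩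
      rw [h] at this
      exact this
  -- π0 preserves functions
  have hfun : ∀ {n : ℕ} (F : L.Functions n) (x : Fin n → A),
      π0 (Structure.funMap F x) = Structure.funMap F (π0 ∘ x) := by
    intro n F x
    have hmem := f.dom_closed.graph_mem n F
    have h := (key (n + 1) _ hmem).symm.trans (hIso.map_graph n F)
    set s : Fin (n + 1) → A := Fin.snoc x (Structure.funMap F x) with hsdef
    have hsg : s ∈ funGraph L A F := by
      show Structure.funMap F (fun i => s i.castSucc) = s (Fin.last n)
      simp [hsdef, Fin.snoc_castSucc, Fin.snoc_last]
    have : (π0 ∘ s) ∈ funGraph L B F := by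
      rw [← h]
      exact ⟨s, hsg, rfl⟩
    have h2 : Structure.funMap F (fun i => (π0 ∘ s) i.castSucc) = (π0 ∘ s) (Fin.last n) := this
    have e1 : (fun i => (π0 ∘ s) i.castSucc) = π0 ∘ x := by
      funext i; simp [hsdef, Fin.snoc_castSucc]
    have e2 : (π0 ∘ s) (Fin.last n) = π0 (Structure.funMap F x) := by
      simp [hsdef, Fin.snoc_last]
    rw [e1, e2] at h2
    exact h2.symm
  refine ⟨⟨Equiv.ofBijective π0 ⟨hinj, fun b => ⟨σ b, hσ b⟩⟩, fun {n} F x => hfun F x,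
    fun {n} R x => hrel R x⟩, key⟩

private lemma imageIsIso {L : FirstOrder.Language.{u, v}} {A : Type w} {B : Type x}
    [L.Structure A] [L.Structure B] (f : PartialTeamMap L A B) (hT : f.Total)
    (π : A ≃[L] B)
    (hf : ∀ (n : ℕ) (X : Set (Fin n → A)), f.toFun n X = (fun s => ⇑π ∘ s) '' X) :
    f.IsIso ∧ f.ElementSurjective := by
  have ginj : ∀ n : ℕ, Function.Injective (fun s : Fin n → A => ⇑π ∘ s) :=
    fun n s t h => funext fun i => π.injective (congrFun h i)
  have gsurj : ∀ {n : ℕ} (t : Fin n → B), (fun s : Fin n → A => ⇑π ∘ s) (⇑π.symm ∘ t) = t :=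
    fun t => funext fun i => π.apply_symm_apply (t i)
  constructor
  · constructor
    · intro n X _
      rw [hf]
      exact Iff.symm Set.image_eq_empty
    · intro n X _
      rw [hf]
      constructor
      · rintro rfl
        exact Set.eq_univ_iff_forall.mpr fun t => ⟨⇑π.symm ∘ t, trivial, gsurj t⟩
      · intro h
        refine Set.eq_univ_iff_forall.mpr fun s => ?_
        have : ⇑π ∘ s ∈ (fun s : Fin n → A => ⇑π ∘ s) '' X := h ▸ trivial
        obtain ⟨s', hs', hss⟩ := this
        rwa [← ginj n hss]
    · intro n X _
      rw [hf]
      constructor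
      · rintro ⟨s, rfl⟩
        exact ⟨⇑π ∘ s, Set.image_singleton⟩
      · rintro ⟨t, ht⟩
        refine ⟨⇑π.symm ∘ t, Set.image_injective.mpr (ginj n) ?_⟩
        rw [ht, Set.image_singleton]
        exact Set.singleton_eq_singleton_iff.mpr
          (funext fun i => (π.apply_symm_apply (t i)).symm)
    · intro n m X Y _ _
      rw [hf, hf, hf]
      ext t
      constructor
      · rintro ⟨s, ⟨hsX, hsY⟩, rfl⟩
        exact ⟨⟨_, hsX, rfl⟩, ⟨_, hsY, rfl⟩⟩
      · rintro ⟨⟨x, hx, hxe⟩, ⟨y, hy, hye⟩⟩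
        refine ⟨⇑π.symm ∘ t, ⟨?_, ?_⟩, gsurj t⟩
        · have : (fun i => (⇑π.symm ∘ t) (Fin.castAdd m i)) = x := by
            funext i
            have := congrFun hxe i
            dsimp at this ⊢
            rw [← this, π.symm_apply_apply]
          rwa [this]
        · have : (fun j => (⇑π.symm ∘ t) (Fin.natAdd n j)) = y := by
            funext j
            have := congrFun hye j
            dsimp at this ⊢
            rw [← this, π.symm_apply_apply]
          rwa [this]
    · intro n m ι X _
      rw [hf, hf]
      simp only [teamProj, Set.image_image]
      rfl
    · intro n X Y hX hY
      rw [hf, hf]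
      exact Iff.symm (Set.image_subset_image_iff (ginj n))
    · rw [hf]
      ext t
      constructor
      · rintro ⟨s, hs, rfl⟩
        show π (s 0) = π (s 1)
        rw [hs]
      · intro ht
        refine ⟨⇑π.symm ∘ t, ?_, gsurj t⟩
        show π.symm (t 0) = π.symm (t 1)
        rw [show t 0 = t 1 from ht]
    · intro n R
      rw [hf]
      ext t
      constructor
      · rintro ⟨s, hs, rfl⟩
        exact (π.map_rel R s).mpr hs
      · intro ht
        refine ⟨⇑π.symm ∘ t, ?_, gsurj t⟩
        show Structure.RelMap R (⇑π.symm ∘ t)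
        rw [← π.map_rel R (⇑π.symm ∘ t)]
        have : ⇑π ∘ (⇑π.symm ∘ t) = t := gsurj t
        rwa [this]
    · intro n F
      rw [hf]
      ext t
      constructor
      · rintro ⟨s, hs, rfl⟩
        show Structure.funMap F (fun i : Fin n => (⇑π ∘ s) i.castSucc) = (⇑π ∘ s) (Fin.last n)
        have : (fun i : Fin n => (⇑π ∘ s) i.castSucc) = ⇑π ∘ (fun i => s i.castSucc) := rfl
        rw [this, ← π.map_fun, hs]
        rfl
      · intro ht
        refine ⟨⇑π.symm ∘ t, ?_, gsurj t⟩
        show Structure.funMap F (fun i : Fin n => (⇑π.symm ∘ t) i.castSucc) = (⇑π.symm ∘ t) (Fin.last n)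
        apply π.injective
        have : (fun i : Fin n => (⇑π.symm ∘ t) i.castSucc) = ⇑π.symm ∘ (fun i : Fin n => t i.castSucc) := rfl
        rw [this, π.map_fun]
        have e1 : ⇑π ∘ (⇑π.symm ∘ (fun i : Fin n => t i.castSucc)) = fun i : Fin n => t i.castSucc :=
          gsurj _
        rw [e1, show (⇑π.symm ∘ t) (Fin.last n) = π.symm (t (Fin.last n)) from rfl,
          π.apply_symm_apply]
        exact ht
  · intro b
    refine ⟨{fun _ => π.symm b}, by rw [hT]; trivial, ?_⟩
    rw [hf, Set.image_singleton]
    congr 1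
    funext i
    exact π.apply_symm_apply b

/-- **Element-total and element-surjective partial team isomorphisms come from ordinary
isomorphisms.**  (i) If `f` is an element-total, element-surjective partial team
isomorphism then there is an isomorphism `π : 𝔄 ≃ 𝔅` with `f(X) = π̂(X) = π[X]` for all
`X ∈ dom f`.  (ii) Consequently, a total team map `f` is a team isomorphism (a total,
element-surjective partial team isomorphism) iff `f = π̂` for some isomorphism `π`. -/
theorem partialTeamIso_elementTotal_elementSurjective
    {L : FirstOrder.Language.{u, v}} {A : Type w} {B : Type x}
    [L.Structure A] [L.Structure B] :
    (∀ f : PartialTeamMap L A B, f.IsIso → f.ElementTotal → f.ElementSurjective →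
      ∃ π : A ≃[L] B, ∀ (n : ℕ) (X : Set (Fin n → A)), X ∈ f.dom n →
        f.toFun n X = (fun s => ⇑π ∘ s) '' X) ∧
    (∀ f : PartialTeamMap L A B, f.Total →
      ((f.IsIso ∧ f.ElementSurjective) ↔
        ∃ π : A ≃[L] B, ∀ (n : ℕ) (X : Set (Fin n → A)),
          f.toFun n X = (fun s => ⇑π ∘ s) '' X)) := by
  constructor
  · exact fun f hIso hTot hSurj => mainIso f hIso hTot hSurj
  · intro f hT
    constructor
    · rintro ⟨hIso, hSurj⟩
      obtain ⟨π, hπ⟩ := mainIso f hIso (fun a => by rw [hT]; trivial) hSurj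
      exact ⟨π, fun n X => hπ n X (by rw [hT]; trivial)⟩
    · rintro ⟨π, hπ⟩
      exact imageIsIso f hT π (hπ)


end TeamSem
end

section
/- Let f: 𝔄 → ℭ be a team embedding of τ-structures, and let 𝔅 be the τ-structure with domain B = {f(a) : a ∈ A}, with R^𝔅 = f(R^𝔄) ∩ B^{ar(R)} for every relation symbol R ∈ τ, with graph(F^𝔅) = f(graph F^𝔄) ∩ B^{ar(F)+1} for every function symbol F ∈ τ, and with c^𝔅 = f(c^𝔄) for every constant symbol c ∈ τ. Then: (i) these interpretations are well defined and 𝔅 is a substructure of ℭ; (ii) the map g: R(𝔄) → R(𝔅) defined by g(X) = f(X) ∩ B^n for X ⊆ A^n is a team isomorphism 𝔄 → 𝔅 (a total, element-surjective partial team isomorphism); (iii) if f is moreover an elementary team embedding, then f ∘ g⁻¹ is an elementary team embedding and 𝔅 is an elementary substructure of ℭ. -/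
open FirstOrder Language Set

universe u v w x

/-!
A team embedding is determined by its element map `fel`: `f` preserves products, and tuples
are products of elements, so `f {s} = {fel ∘ s}` in every arity; (PI5) then gives
`fel ∘ s ∈ f X ↔ s ∈ X`. Applied to relations and function graphs, this makes `fel` a
first-order embedding, and on its range `B` the map `X ↦ f X ∩ Bⁿ` is just the image of `X`
under the isomorphism `A ≃ B`, which is a team isomorphism. For elementarity, `φ(a⃗)` is
expressed by the sentence `∀ x⃗, R x⃗ → φ x⃗` with `R` read as `{a⃗}`, which `f` transfers to the
same sentence with `R` read as `{fel ∘ a⃗}`.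
-/

namespace TeamSem

open FirstOrder Language Set Structure

section TupleImage

variable {α β : Type*}

lemma mem_image_comp_equiv (e : α ≃ β) {n : ℕ} {X : Set (Fin n → α)} {s : Fin n → β} :
    s ∈ (e ∘ ·) '' X ↔ e.symm ∘ s ∈ X := by
  constructor
  · rintro ⟨a, ha, rfl⟩
    simpa [Function.comp_def] using ha
  · intro h
    exact ⟨e.symm ∘ s, h, by ext; simp⟩

lemma image_comp_teamProd (e : α → β) {n m : ℕ} (X : Set (Fin n → α)) (Y : Set (Fin m → α)) :
    (e ∘ ·) '' teamProd X Y = teamProd ((e ∘ ·) '' X) ((e ∘ ·) '' Y) := by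
  ext s
  constructor
  · rintro ⟨a, ⟨ha, hb⟩, rfl⟩
    exact ⟨⟨_, ha, rfl⟩, ⟨_, hb, rfl⟩⟩
  · rintro ⟨⟨a, ha, has⟩, ⟨b, hb, hbs⟩⟩
    refine ⟨Fin.append a b, ⟨by simpa using ha, by simpa using hb⟩, ?_⟩
    ext i
    refine Fin.addCases (fun j => ?_) (fun j => ?_) i
    · simpa using congrFun has j
    · simpa using congrFun hbs j

lemma image_comp_teamProj (e : α → β) {n m : ℕ} (ι : Fin m → Fin n) (X : Set (Fin n → α)) :
    (e ∘ ·) '' teamProj ι X = teamProj ι ((e ∘ ·) '' X) := by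
  simp only [teamProj, image_image]
  rfl

lemma teamProd_singleton_s11 {n m : ℕ} (u : Fin n → α) (v : Fin m → α) :
    teamProd ({u} : Set (Fin n → α)) {v} = {Fin.append u v} := by
  ext s
  simp only [teamProd, mem_ofPred_eq, mem_singleton_iff]
  constructor
  · rintro ⟨hu, hv⟩
    ext i
    refine Fin.addCases (fun j => ?_) (fun j => ?_) i
    · simpa using congrFun hu j
    · simpa using congrFun hv j
  · rintro rfl
    exact ⟨by ext; simp, by ext; simp⟩

lemma image_comp_univ {e : α → β} (he : Function.Surjective e) (n : ℕ) :
    (e ∘ ·) '' (univ : Set (Fin n → α)) = univ :=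
  image_univ_of_surjective fun t => ⟨Function.surjInv he ∘ t, by ext; simp [Function.surjInv_eq]⟩

lemma image_image_comp_univ {e : α → β} (he : Function.Surjective e) (n : ℕ) :
    image (e ∘ ·) '' (univ : Set (Set (Fin n → α))) = univ :=
  image_univ_of_surjective (image_surjective.mpr fun t =>
    ⟨Function.surjInv he ∘ t, by ext; simp [Function.surjInv_eq]⟩)

lemma comp_injective {e : α → β} (he : Function.Injective e) (n : ℕ) :
    Function.Injective (e ∘ · : (Fin n → α) → Fin n → β) :=
  fun _ _ h => funext fun i => he (congrFun h i)

end TupleImage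

lemma isClosedFamily_univ {L : FirstOrder.Language.{u, v}} {M : Type*} [L.Structure M] :
    IsClosedFamily L M fun n => (univ : Set (Set (Fin n → M))) := by
  constructor <;> intros <;> trivial

lemma PartialTeamMap.Total.mem_dom {L : FirstOrder.Language.{u, v}} {M : Type*} {N : Type*}
    [L.Structure M] [L.Structure N] {f : PartialTeamMap L M N} (hf : f.Total) {n : ℕ}
    (X : Set (Fin n → M)) : X ∈ f.dom n :=
  hf n ▸ mem_univ X

section OfEquiv

variable {L : FirstOrder.Language.{u, v}} {M : Type*} {N : Type*} [L.Structure M] [L.Structure N]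

namespace PartialTeamMap

def ofEquiv (E : M ≃[L] N) : PartialTeamMap L M N where
  dom _ := univ
  toFun _ X := (E ∘ ·) '' X
  dom_closed := isClosedFamily_univ
  ran_closed := by
    convert isClosedFamily_univ (L := L) (M := N) using 1
    exact funext (image_image_comp_univ E.surjective)
  map_empty _ := image_empty _

lemma mem_ofEquiv_toFun_iff (E : M ≃[L] N) {n : ℕ} {X : Set (Fin n → M)} {s : Fin n → N} :
    s ∈ (ofEquiv E).toFun n X ↔ E.symm ∘ s ∈ X :=
  mem_image_comp_equiv E.toEquiv

lemma ofEquiv_ran (E : M ≃[L] N) (n : ℕ) : (ofEquiv E).ran n = univ :=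
  image_image_comp_univ E.surjective n

lemma ofEquiv_elementSurjective (E : M ≃[L] N) : (ofEquiv E).ElementSurjective := fun _ => by
  rw [ofEquiv_ran]
  trivial

lemma ofEquiv_isIso (E : M ≃[L] N) : (ofEquiv E).IsIso := by
  have hinj (n : ℕ) := image_injective.mpr (comp_injective E.injective n)
  constructor
  · intro n X _
    exact image_eq_empty.symm
  · intro n X _
    rw [← (hinj n).eq_iff, image_comp_univ E.surjective]
    rfl
  · intro n X _
    refine ⟨fun ⟨s, hs⟩ => ⟨E ∘ s, hs ▸ image_singleton⟩, fun ⟨t, ht⟩ => ⟨E.symm ∘ t, hinj n ?_⟩⟩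
    rw [image_singleton, show E ∘ E.symm ∘ t = t by ext; simp]
    exact ht
  · intro n m X Y _ _
    exact image_comp_teamProd E X Y
  · intro n m ι X _
    exact image_comp_teamProj E ι X
  · intro n X Y _ _
    exact (image_subset_image_iff (comp_injective E.injective n)).symm
  · ext s
    simp [mem_ofEquiv_toFun_iff, diag]
  · intro n R
    ext s
    simp [mem_ofEquiv_toFun_iff, relSet, E.symm.map_rel]
  · intro n F
    ext s
    simp only [mem_ofEquiv_toFun_iff, funGraph, mem_ofPred_eq, Function.comp_apply]
    rw [← E.symm.injective.eq_iff, E.symm.map_fun]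
    rfl

end PartialTeamMap

lemma realizeWith_image_equiv (E : M ≃[L] N) {k : ℕ} {ar : Fin k → ℕ}
    (φ : (L.sum (relLang k ar)).Sentence) (X : ∀ i, Set (Fin (ar i) → M)) :
    RealizeWith M φ X ↔ RealizeWith N φ fun i => (E ∘ ·) '' X i := by
  let _ := relStructure X
  let _ := relStructure fun i => (E ∘ ·) '' X i
  let E' : M ≃[L.sum (relLang k ar)] N :=
    { toEquiv := E.toEquiv
      map_fun' := by
        rintro n (F | F) x
        · exact E.map_fun' F x
        · exact F.elim
      map_rel' := by
        rintro n (R | R) x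
        · exact E.map_rel' R x
        · exact (mem_image_comp_equiv E.toEquiv).trans (by simp [Function.comp_def]; rfl) }
  exact StrongHomClass.realize_sentence E' φ

end OfEquiv

/-- `∀ x⃗, R₀ x⃗ → φ x⃗`. -/
def guardedSentence {L : FirstOrder.Language.{u, v}} {n : ℕ} (φ : L.Formula (Fin n)) :
    (L.sum (relLang 1 fun _ => n)).Sentence :=
  ((Relations.boundedFormula (Sum.inr ⟨0, rfl⟩ : (L.sum (relLang 1 fun _ => n)).Relations n)
        fun i => Term.var (Sum.inr i)).imp
      (BoundedFormula.relabel (Sum.inr : Fin n → Empty ⊕ Fin n) (LHom.sumInl.onFormula φ))).alls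

lemma realizeWith_guardedSentence {L : FirstOrder.Language.{u, v}} {M : Type*} [L.Structure M]
    {n : ℕ} (φ : L.Formula (Fin n)) (b : Fin n → M) :
    RealizeWith M (guardedSentence φ) (fun _ => {b}) ↔ φ.Realize b := by
  let _ := relStructure fun _ : Fin 1 => ({b} : Set (Fin n → M))
  have hbody (xs : Fin n → M) :
      (BoundedFormula.relabel (Sum.inr : Fin n → Empty ⊕ Fin n)
        (LHom.sumInl.onFormula φ : (L.sum (relLang 1 fun _ => n)).Formula (Fin n))).Realize
        default xs ↔ φ.Realize xs := by
    rw [BoundedFormula.realize_relabel, Unique.eq_default (α := Fin 0 → M) (xs ∘ Fin.natAdd n)]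
    exact LHom.realize_onFormula _ φ
  change (guardedSentence φ).Realize M ↔ _
  rw [Sentence.Realize, guardedSentence, BoundedFormula.realize_alls]
  simp only [BoundedFormula.realize_imp, hbody]
  exact ⟨fun h => h b rfl, fun h xs (hxs : xs = b) => hxs ▸ h⟩

lemma Embedding.isElementary_range {L : FirstOrder.Language.{u, v}} {M : Type*} {N : Type*}
    [L.Structure M] [L.Structure N] (e : M ↪[L] N)
    (he : ∀ {n : ℕ} (φ : L.Formula (Fin n)) (x : Fin n → M), φ.Realize (e ∘ x) ↔ φ.Realize x) :
    e.toHom.range.IsElementary := by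
  intro n φ x
  have hx : x = e.equivRange ∘ e.equivRange.symm ∘ x := by ext; simp
  rw [hx, StrongHomClass.realize_formula, ← he]
  congr! 1

namespace PartialTeamMap

section Precomposition

variable {L : FirstOrder.Language.{u, v}} {M : Type*} {A : Type w} {C : Type x}
  [L.Structure M] [L.Structure A] [L.Structure C]

def compEquiv (f : PartialTeamMap L A C) (hf : f.Total) (E : M ≃[L] A) : PartialTeamMap L M C where
  dom _ := univ
  toFun n Y := f.toFun n ((E ∘ ·) '' Y)
  dom_closed := isClosedFamily_univ
  ran_closed := by
    have hran : (fun n => (fun Y => f.toFun n ((E ∘ ·) '' Y)) '' univ) = f.ran := funext fun n => by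
      rw [← image_image (f.toFun n), image_image_comp_univ E.surjective, ← hf n]
      rfl
    exact hran ▸ f.ran_closed
  map_empty n := by
    simp only [image_empty]
    exact f.map_empty n

lemma compEquiv_symm_toFun_ofEquiv (f : PartialTeamMap L A C) (hf : f.Total) (E : A ≃[L] M)
    {n : ℕ} (X : Set (Fin n → A)) :
    (f.compEquiv hf E.symm).toFun n ((ofEquiv E).toFun n X) = f.toFun n X := by
  change f.toFun n (_ '' (_ '' X)) = _
  rw [image_image]
  simp [Function.comp_def]

lemma IsElementary.compEquiv {f : PartialTeamMap L A C} (helem : f.IsElementary) (hf : f.Total)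
    (E : M ≃[L] A) : (f.compEquiv hf E).IsElementary :=
  fun k ar φ X _ hne => (realizeWith_image_equiv E φ X).trans
    (helem k ar φ _ (fun _ => hf.mem_dom _) fun i => (hne i).image _)

end Precomposition

section TeamEmbedding

variable {L : FirstOrder.Language.{u, v}} {A : Type w} {C : Type x} [L.Structure A] [L.Structure C]
  {f : PartialTeamMap L A C} {fel : A → C}

namespace IsIso

variable (hIso : f.IsIso) (hTot : f.Total)
  (hfel : ∀ a : A, f.toFun 1 {fun _ => a} = ({fun _ => fel a} : Set (Fin 1 → C)))
include hIso hTot hfel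

lemma map_singleton {n : ℕ} (s : Fin n → A) : f.toFun n {s} = {fel ∘ s} := by
  induction n with
  | zero =>
    rw [(singleton_nonempty s).eq_univ, (singleton_nonempty (fel ∘ s)).eq_univ]
    exact (hIso.univ_iff 0 univ (hTot.mem_dom _)).mp rfl
  | succ n ih =>
    have hlast : (fun i => s (Fin.natAdd n i) : Fin 1 → A) = fun _ => s (Fin.last n) :=
      funext fun i => by rw [Fin.fin_one_eq_zero i]; rfl
    rw [← Fin.append_castAdd_natAdd (f := s), ← teamProd_singleton_s11,
      hIso.map_prod _ _ _ _ (hTot.mem_dom _) (hTot.mem_dom _), ih, hlast, hfel,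
      teamProd_singleton_s11]
    congr 1
    ext i
    refine Fin.addCases (fun j => ?_) (fun j => ?_) i
    · simp
    · simp [Fin.fin_one_eq_zero j]

lemma comp_mem_toFun_iff {n : ℕ} (X : Set (Fin n → A)) (s : Fin n → A) :
    fel ∘ s ∈ f.toFun n X ↔ s ∈ X := by
  rw [← singleton_subset_iff, ← hIso.map_singleton hTot hfel,
    ← hIso.subset_iff _ _ _ (hTot.mem_dom _) (hTot.mem_dom _), singleton_subset_iff]

def toEmbedding : A ↪[L] C where
  toFun := fel
  inj' a b hab := by
    have := hIso.comp_mem_toFun_iff hTot hfel {fun _ : Fin 1 => b} fun _ => a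
    rw [hIso.map_singleton hTot hfel] at this
    exact congrFun (this.mp (funext fun _ => hab)) 0
  map_fun' F x := by
    have hgraph := (hIso.comp_mem_toFun_iff hTot hfel (funGraph L A F)
      (Fin.snoc x (funMap F x))).mpr (by simp [funGraph])
    rw [hIso.map_graph] at hgraph
    simpa [funGraph, Function.comp_def] using hgraph.symm
  map_rel' R x := by
    have := hIso.comp_mem_toFun_iff hTot hfel (relSet L A R) x
    rwa [hIso.map_rel] at this

lemma realize_comp_of_isElementary (helem : f.IsElementary) {n : ℕ} (φ : L.Formula (Fin n))
    (s : Fin n → A) : φ.Realize (fel ∘ s) ↔ φ.Realize s := by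
  have := helem 1 (fun _ => n) (guardedSentence φ) (fun _ => {s}) (fun _ => hTot.mem_dom _)
    fun _ => singleton_nonempty s
  simp only [hIso.map_singleton hTot hfel, realizeWith_guardedSentence] at this
  exact this.symm

end IsIso

end TeamEmbedding

end PartialTeamMap

/-- **From a team embedding to a substructure.**
Given a team embedding `f : 𝔄 → ℭ` with induced element map `fel` (so that
`f({a}) = {fel a}`), the set `B = range fel` carries a substructure `S` of `ℭ` whose
interpretations are the ones induced by `f` (`R^𝔅 = f(R^𝔄) ∩ Bⁿ` and
`graph F^𝔅 = f(graph F^𝔄) ∩ B^{n+1}`); the map `g(X) = f(X) ∩ Bⁿ` is a team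
isomorphism `𝔄 → 𝔅`; and if `f` is elementary then `f ∘ g⁻¹` is a partial elementary
team map and `𝔅` is an elementary substructure of `ℭ`. -/
theorem teamEmbedding_substructure
    {L : FirstOrder.Language.{u, v}} {A : Type w} {C : Type x}
    [L.Structure A] [L.Structure C]
    (f : PartialTeamMap L A C) (hTot : f.Total) (hIso : f.IsIso)
    (fel : A → C)
    (hfel : ∀ a : A, f.toFun 1 {fun _ => a} = ({fun _ => fel a} : Set (Fin 1 → C))) :
    ∃ S : L.Substructure C, (S : Set C) = Set.range fel ∧
      -- (i) the interpretations specified from `f` are exactly the induced ones,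
      --     so they are well defined and `𝔅` is a substructure of `ℭ`
      (∀ (n : ℕ) (R : L.Relations n) (s : Fin n → C), (∀ i, s i ∈ S) →
        (s ∈ f.toFun n (relSet L A R) ↔ s ∈ relSet L C R)) ∧
      (∀ (n : ℕ) (F : L.Functions n) (s : Fin (n + 1) → C), (∀ i, s i ∈ S) →
        (s ∈ f.toFun (n + 1) (funGraph L A F) ↔ s ∈ funGraph L C F)) ∧
      -- (ii) `g(X) = f(X) ∩ Bⁿ` is a team isomorphism `𝔄 → 𝔅`
      ∃ g : PartialTeamMap L A S, g.Total ∧ g.IsIso ∧ g.ElementSurjective ∧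
        (∀ (n : ℕ) (X : Set (Fin n → A)) (s : Fin n → S),
          s ∈ g.toFun n X ↔ (fun i => (s i : C)) ∈ f.toFun n X) ∧
        -- (iii) if `f` is elementary, `f ∘ g⁻¹` is a partial elementary team map
        --       with domain `ran g`, and `𝔅` is an elementary substructure of `ℭ`
        (f.IsElementary →
          S.IsElementary ∧
          ∃ h : PartialTeamMap L S C, h.IsElementary ∧ (∀ n, h.dom n = g.ran n) ∧
            ∀ (n : ℕ) (X : Set (Fin n → A)),
              h.toFun n (g.toFun n X) = f.toFun n X) := by
  let emb := hIso.toEmbedding hTot hfel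
  let ε := emb.equivRange
  let g := PartialTeamMap.ofEquiv ε
  have hg {n : ℕ} (X : Set (Fin n → A)) (s : Fin n → emb.toHom.range) :
      s ∈ g.toFun n X ↔ (fun i => (s i : C)) ∈ f.toFun n X := by
    rw [PartialTeamMap.mem_ofEquiv_toFun_iff, ← hIso.comp_mem_toFun_iff hTot hfel]
    exact iff_of_eq (congrArg (· ∈ f.toFun n X)
      (funext fun i => congrArg Subtype.val (ε.apply_symm_apply (s i))))
  refine ⟨emb.toHom.range, Hom.range_coe _, fun n R s _ => by rw [hIso.map_rel],
    fun n F s _ => by rw [hIso.map_graph], g, fun _ => rfl, PartialTeamMap.ofEquiv_isIso ε,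
    PartialTeamMap.ofEquiv_elementSurjective ε, fun n X s => hg X s, fun helem => ⟨?_, ?_⟩⟩
  · exact Embedding.isElementary_range emb (hIso.realize_comp_of_isElementary hTot hfel helem)
  · exact ⟨f.compEquiv hTot ε.symm, helem.compEquiv hTot ε.symm,
      fun n => (PartialTeamMap.ofEquiv_ran ε n).symm,
      fun n X => f.compEquiv_symm_toFun_ofEquiv hTot ε X⟩

end TeamSem
end
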